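/- arXiv:2310.19578 — 4 statements merged into one kernel-verified Lean document; each statement's English description precedes it below -/
import Mathlib

section
/- Fix α ∈ (0,1), a ℤ-grid Λ in ℂ, and φ, ψ : ℕ → (0,∞) with φ(N)/N^{1−α} → +∞ and ψ(N) = (N^{2−α}/φ(N))². Let f : ℂ → ℂ be continuously differentiable with compact support and A > 1 with supp f ⊆ D(0,A). Then there exists an integer N₀, depending only on α, Λ, φ and A, such that for all N ≥ N₀ and all N', N'' ∈ ℕ, the level separated empirical pair correlation measure satisfies ℛ^{α,Λ,lvl}_{N,N',N''}(f) = 0. -/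
open Filter Topology MeasureTheory
open scoped ENNReal

noncomputable section

/-- The ℤ-lattice generated by `w₁, w₂`. -/
def latSet (w₁ w₂ : ℂ) : Set ℂ := {p : ℂ | ∃ a b : ℤ, p = (a : ℂ) * w₁ + (b : ℂ) * w₂}

/-- The ℤ-grid `z₀ + latSet w₁ w₂`. -/
def gridSet (z₀ w₁ w₂ : ℂ) : Set ℂ := {m : ℂ | ∃ p ∈ latSet w₁ w₂, m = z₀ + p}

/-- The covolume (area of a fundamental parallelogram) of the lattice generated by `w₁, w₂`. -/
def covol (w₁ w₂ : ℂ) : ℝ := |((starRingEnd ℂ) w₁ * w₂).im|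

/-- The representative of `arg z` in `[2πk, 2π(k+1))`. -/
def levelArg (k : ℤ) (z : ℂ) : ℝ :=
  Complex.arg z - 2 * Real.pi * (⌊(Complex.arg z - 2 * Real.pi * k) / (2 * Real.pi)⌋ : ℤ)

/-- The level-`k` `β` power `z^{[β,k]} = |z|^β e^{iβω_k}`. -/
def levelPow (β : ℝ) (k : ℤ) (z : ℂ) : ℂ :=
  ((‖z‖ ^ β : ℝ) : ℂ) * Complex.exp (Complex.I * (β * levelArg k z))

/-- Evaluation on `f` of the level separated empirical pair correlation measure
`ℛ^{α,Λ,lvl}_{N,N',N''}`. -/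
def Rlvl (α : ℝ) (z₀ w₁ w₂ : ℂ) (φ ψ : ℕ → ℝ) (N N' N'' : ℕ) (f : ℂ → ℂ) : ℂ :=
  (((((N' + N'' : ℕ) : ℝ) * ψ N)⁻¹ : ℝ) : ℂ) *
    ∑ k ∈ Finset.Ico (-(N' : ℤ)) ((N'' : ℕ) : ℤ),
      ∑' q : {q : ℂ × ℂ // q.1 ∈ gridSet z₀ w₁ w₂ ∧ q.2 ∈ gridSet z₀ w₁ w₂ ∧ q.1 ≠ q.2 ∧
          0 < ‖q.1‖ ∧ ‖q.1‖ ≤ (N : ℝ) ∧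
          0 < ‖q.2‖ ∧ ‖q.2‖ ≤ (N : ℝ)},
        f (((φ N : ℝ) : ℂ) * (levelPow α k q.1.1 - levelPow α k q.1.2))

/-- The limit density `ρ_{α,Λ⃗,λ}` for `λ ∈ [0,+∞]`. -/
def rhoLim (α : ℝ) (w₁ w₂ : ℂ) (lam : ℝ≥0∞) (z : ℂ) : ℝ :=
  if lam = ⊤ then 0
  else if lam = 0 then Real.pi / (α ^ 2 * (2 - α) * covol w₁ w₂ ^ 2)
  else (α ^ ((2 : ℝ) / (1 - α)) / ((1 - α) * covol w₁ w₂)) *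
      (‖z‖ / lam.toReal) ^ (-(4 - 2 * α) / (1 - α)) *
      ∑' p : {p : ℂ // p ∈ latSet w₁ w₂ ∧
          ‖(p : ℂ)‖ ≤ ‖z‖ / (α * lam.toReal)},
        (‖p.1‖ : ℝ) ^ ((2 : ℝ) / (1 - α))

/-! Distinct points of the grid differ by a nonzero lattice vector, so they are at distance at
least some `δ > 0`. On `0 < |z| ≤ N` the inverse of the level-`k` power `z ↦ z^{[α,k]}` is
`C N^{1-α}`-Lipschitz: radially by the concavity of `r ↦ r^α`, and angularly because the two
angles `α ω_k` lie in an interval of length `2πα < 2π`, so the chord between `e^{iαu}` and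
`e^{iαv}` is comparable to `|u - v|`. Hence `φ(N) |n^{[α,k]} - m^{[α,k]}| ≥ δ φ(N) / (C N^{1-α})`,
which tends to `∞`; once it exceeds `A`, every Dirac mass lies outside `supp f`. -/

lemma latSet_eq_span (w₁ w₂ : ℂ) :
    latSet w₁ w₂ = Submodule.span ℤ (Set.range ![w₁, w₂]) := by
  ext p
  rw [Matrix.range_cons, Matrix.range_cons, Matrix.range_empty, Set.union_empty,
    Set.singleton_union, SetLike.mem_coe, Submodule.mem_span_pair]
  simp only [latSet, Set.mem_ofPred_eq, zsmul_eq_mul, eq_comm]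

lemma exists_pos_le_norm_of_mem_latSet {w₁ w₂ : ℂ} (hindep : LinearIndependent ℝ ![w₁, w₂]) :
    ∃ δ > 0, ∀ p ∈ latSet w₁ w₂, p ≠ 0 → δ ≤ ‖p‖ := by
  let B := basisOfLinearIndependentOfCardEqFinrank hindep
    (by rw [Fintype.card_fin, Complex.finrank_real_complex])
  have hB : ⇑B = ![w₁, w₂] := coe_basisOfLinearIndependentOfCardEqFinrank _ _
  obtain ⟨δ, hδ, hisol⟩ := Metric.isOpen_singleton_iff.1
    (isOpen_discrete ({0} : Set (Submodule.span ℤ (Set.range B))))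
  refine ⟨δ, hδ, fun p hp hp0 => not_lt.1 fun hlt => hp0 ?_⟩
  rw [latSet_eq_span, ← hB] at hp
  simpa using hisol ⟨p, hp⟩ (by simpa using hlt)

lemma sub_mem_latSet {z₀ w₁ w₂ n m : ℂ} (hn : n ∈ gridSet z₀ w₁ w₂) (hm : m ∈ gridSet z₀ w₁ w₂) :
    n - m ∈ latSet w₁ w₂ := by
  obtain ⟨p, hp, rfl⟩ := hn
  obtain ⟨q, hq, rfl⟩ := hm
  rw [latSet_eq_span] at hp hq ⊢
  simpa using sub_mem hp hq

lemma mul_sub_le_rpow_mul_rpow_sub_rpow {α r s N : ℝ} (hα0 : 0 ≤ α) (hα1 : α ≤ 1)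
    (hs : 0 < s) (hsr : s ≤ r) (hrN : r ≤ N) :
    α * (r - s) ≤ N ^ (1 - α) * (r ^ α - s ^ α) := by
  have hr : 0 < r := hs.trans_le hsr
  -- Bernoulli: `(s / r) ^ α ≤ 1 + α (s / r - 1)`, i.e. `α r ^ (α - 1) (r - s) ≤ r ^ α - s ^ α`
  have hbern := rpow_one_add_le_one_add_mul_self (s := s / r - 1)
    (by linarith [div_nonneg hs.le hr.le]) hα0 hα1
  rw [add_sub_cancel, Real.div_rpow hs.le hr.le, div_le_iff₀ (by positivity)] at hbern
  have hr1 : r ^ (1 - α) * r ^ α = r := by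
    rw [← Real.rpow_add hr, sub_add_cancel, Real.rpow_one]
  calc α * (r - s) = r ^ (1 - α) * (r ^ α - (1 + α * (s / r - 1)) * r ^ α) := by
        field_simp; rw [mul_assoc, hr1]; ring
    _ ≤ N ^ (1 - α) * (r ^ α - s ^ α) := by
        refine mul_le_mul (Real.rpow_le_rpow hr.le hrN (by linarith)) (by linarith)
          ?_ (Real.rpow_nonneg (hr.le.trans hrN) _)
        have : s / r ≤ 1 := (div_le_one hr).2 hsr
        nlinarith [mul_nonneg (mul_nonneg hα0 (sub_nonneg.2 this)) (Real.rpow_nonneg hr.le α)]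

section Polar

open Complex

lemma norm_exp_mul_I_sub_exp_mul_I_le (x y : ℝ) :
    ‖exp (x * I) - exp (y * I)‖ ≤ |x - y| := by
  have h : exp (x * I) - exp (y * I) = exp (y * I) * (exp (I * ↑(x - y)) - 1) := by
    rw [mul_sub, ← Complex.exp_add]; push_cast; ring_nf
  rw [h, norm_mul, norm_exp_ofReal_mul_I, one_mul, ← Real.norm_eq_abs]
  exact Real.norm_exp_I_mul_ofReal_sub_one_le

lemma one_sub_mul_abs_le_abs_toIocMod {α θ : ℝ} (hα : α ≤ 1) (hθ : |θ| ≤ 2 * Real.pi * α) :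
    (1 - α) * |θ| ≤ |toIocMod Real.two_pi_pos (-Real.pi) θ| := by
  rw [← self_sub_toIocDiv_zsmul, zsmul_eq_mul]
  set j := toIocDiv Real.two_pi_pos (-Real.pi) θ
  have hθ0 := abs_nonneg θ
  have hα0 : 0 ≤ α := nonneg_of_mul_nonneg_right (hθ0.trans hθ) Real.two_pi_pos
  rcases eq_or_ne j 0 with hj | hj
  · rw [hj]; simp only [Int.cast_zero, zero_mul, sub_zero]; nlinarith
  · have hj1 : (1 : ℝ) ≤ |(j : ℝ)| := by exact_mod_cast Int.one_le_abs hj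
    -- `|θ - 2πj| ≥ 2π - |θ| ≥ (1 - α)|θ|`, the last step since `α (2 - α) ≤ 1`
    have h2 : 2 * Real.pi - |θ| ≤ |θ - j * (2 * Real.pi)| := by
      have := abs_sub_abs_le_abs_sub (j * (2 * Real.pi)) θ
      rw [abs_sub_comm, abs_mul, abs_of_pos Real.two_pi_pos] at this
      nlinarith [Real.pi_pos]
    nlinarith [Real.pi_pos, sq_nonneg (1 - α)]

lemma mul_abs_sub_le_norm_exp_mul_I_sub {α x y : ℝ} (hα : α ≤ 1) (h : |x - y| ≤ 2 * Real.pi * α) :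
    2 / Real.pi * ((1 - α) * |x - y|) ≤ ‖exp (x * I) - exp (y * I)‖ := by
  refine le_trans ?_ (mul_angle_le_norm_sub (by simp) (by simp))
  rw [angle_exp_exp]
  gcongr
  exact one_sub_mul_abs_le_abs_toIocMod hα h

lemma norm_polar_sub_le (r s u v : ℝ) (hs : 0 ≤ s) :
    ‖(r : ℂ) * exp (u * I) - s * exp (v * I)‖ ≤ |r - s| + s * |u - v| := by
  calc ‖(r : ℂ) * exp (u * I) - s * exp (v * I)‖
      = ‖((r - s : ℝ) : ℂ) * exp (u * I) + s * (exp (u * I) - exp (v * I))‖ := by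
        push_cast; ring_nf
    _ ≤ ‖((r - s : ℝ) : ℂ) * exp (u * I)‖ + ‖(s : ℂ) * (exp (u * I) - exp (v * I))‖ :=
        norm_add_le _ _
    _ ≤ |r - s| + s * |u - v| := by
        rw [norm_mul, norm_mul, norm_exp_ofReal_mul_I, mul_one, norm_real, norm_real,
          Real.norm_eq_abs, Real.norm_of_nonneg hs]
        gcongr
        exact norm_exp_mul_I_sub_exp_mul_I_le u v

lemma abs_sub_le_norm_polar_sub (r s u v : ℝ) (hr : 0 ≤ r) (hs : 0 ≤ s) :
    |r - s| ≤ ‖(r : ℂ) * exp (u * I) - s * exp (v * I)‖ := by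
  simpa [Real.norm_of_nonneg hr, Real.norm_of_nonneg hs] using
    abs_norm_sub_norm_le ((r : ℂ) * exp (u * I)) (s * exp (v * I))

lemma mul_norm_exp_sub_le_two_mul_norm_polar_sub {r s : ℝ} (u v : ℝ) (hs : 0 ≤ s) (hsr : s ≤ r) :
    s * ‖exp (u * I) - exp (v * I)‖ ≤ 2 * ‖(r : ℂ) * exp (u * I) - s * exp (v * I)‖ := by
  have hrs := abs_sub_le_norm_polar_sub r s u v (hs.trans hsr) hs
  calc s * ‖exp (u * I) - exp (v * I)‖ = ‖(s : ℂ) * (exp (u * I) - exp (v * I))‖ := by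
        rw [norm_mul, norm_real, Real.norm_of_nonneg hs]
    _ = ‖((s - r : ℝ) : ℂ) * exp (u * I) + (r * exp (u * I) - s * exp (v * I))‖ := by
        congr 1; push_cast; ring
    _ ≤ |s - r| + ‖(r : ℂ) * exp (u * I) - s * exp (v * I)‖ := by
        refine (norm_add_le _ _).trans_eq ?_
        rw [norm_mul, norm_exp_ofReal_mul_I, mul_one, norm_real, Real.norm_eq_abs]
    _ ≤ 2 * ‖(r : ℂ) * exp (u * I) - s * exp (v * I)‖ := by
        rw [abs_sub_comm]; linarith

lemma norm_polar_sub_le_rpow_mul_norm_polar_rpow_sub {α r s u v N : ℝ} (hα0 : 0 < α) (hα1 : α < 1)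
    (hs : 0 < s) (hsr : s ≤ r) (hrN : r ≤ N) (huv : |u - v| ≤ 2 * Real.pi) :
    ‖(r : ℂ) * exp (u * I) - s * exp (v * I)‖ ≤
      (1 / α + Real.pi / (α * (1 - α))) * N ^ (1 - α) *
        ‖((r ^ α : ℝ) : ℂ) * exp ((α * u : ℝ) * I) - (s ^ α : ℝ) * exp ((α * v : ℝ) * I)‖ := by
  set E := ‖((r ^ α : ℝ) : ℂ) * exp ((α * u : ℝ) * I) - (s ^ α : ℝ) * exp ((α * v : ℝ) * I)‖
  have hπ := Real.pi_pos
  have hr := hs.trans_le hsr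
  have hα1' : 0 < 1 - α := by linarith
  have hN : 0 ≤ N ^ (1 - α) := Real.rpow_nonneg (hr.le.trans hrN) _
  have hradial : α * (r - s) ≤ N ^ (1 - α) * E := by
    refine (mul_sub_le_rpow_mul_rpow_sub_rpow hα0.le hα1.le hs hsr hrN).trans
      (mul_le_mul_of_nonneg_left ((le_abs_self _).trans ?_) hN)
    exact abs_sub_le_norm_polar_sub _ _ _ _ (by positivity) (by positivity)
  have hangular : α * (1 - α) * (s ^ α * |u - v|) ≤ Real.pi * E := by
    have hαuv : |α * u - α * v| = α * |u - v| := by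
      rw [← mul_sub, abs_mul, abs_of_pos hα0]
    have hchord := mul_abs_sub_le_norm_exp_mul_I_sub hα1.le
      (hαuv.trans_le (by nlinarith : α * |u - v| ≤ 2 * Real.pi * α))
    rw [hαuv] at hchord
    calc α * (1 - α) * (s ^ α * |u - v|)
        = Real.pi / 2 * (s ^ α * (2 / Real.pi * ((1 - α) * (α * |u - v|)))) := by
          field_simp
      _ ≤ Real.pi / 2 * (s ^ α * ‖exp ((α * u : ℝ) * I) - exp ((α * v : ℝ) * I)‖) := by
          gcongr
      _ ≤ Real.pi / 2 * (2 * E) := by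
          refine mul_le_mul_of_nonneg_left ?_ (by positivity)
          exact mul_norm_exp_sub_le_two_mul_norm_polar_sub _ _ (by positivity)
            (Real.rpow_le_rpow hs.le hsr hα0.le)
      _ = Real.pi * E := by ring
  have hs_split : s = s ^ (1 - α) * s ^ α := by
    rw [← Real.rpow_add hs, sub_add_cancel, Real.rpow_one]
  calc ‖(r : ℂ) * exp (u * I) - s * exp (v * I)‖
      ≤ (r - s) + s ^ (1 - α) * (s ^ α * |u - v|) := by
        rw [← mul_assoc, ← hs_split, ← abs_of_nonneg (sub_nonneg.2 hsr)]
        exact norm_polar_sub_le r s u v hs.le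
    _ ≤ N ^ (1 - α) * E / α + N ^ (1 - α) * (Real.pi * E / (α * (1 - α))) := by
        refine add_le_add ((le_div_iff₀' hα0).2 hradial) (mul_le_mul
          (Real.rpow_le_rpow hs.le (hsr.trans hrN) hα1'.le)
          ((le_div_iff₀' (by positivity)).2 hangular) (by positivity) hN)
    _ = (1 / α + Real.pi / (α * (1 - α))) * N ^ (1 - α) * E := by ring

end Polar

lemma levelArg_mem_Ico (k : ℤ) (z : ℂ) :
    levelArg k z ∈ Set.Ico (2 * Real.pi * k) (2 * Real.pi * (k + 1)) := by
  have h2π := Real.two_pi_pos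
  have hfl := Int.floor_le ((Complex.arg z - 2 * Real.pi * k) / (2 * Real.pi))
  have hlt := Int.lt_floor_add_one ((Complex.arg z - 2 * Real.pi * k) / (2 * Real.pi))
  rw [le_div_iff₀ h2π] at hfl
  rw [div_lt_iff₀ h2π] at hlt
  constructor <;> unfold levelArg <;> nlinarith

lemma abs_levelArg_sub_levelArg_le (k : ℤ) (z w : ℂ) :
    |levelArg k z - levelArg k w| ≤ 2 * Real.pi := by
  have hz := levelArg_mem_Ico k z
  have hw := levelArg_mem_Ico k w
  rw [abs_le]
  constructor <;> linarith [hz.1, hz.2, hw.1, hw.2]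

lemma norm_mul_exp_levelArg_mul_I (k : ℤ) (z : ℂ) :
    (‖z‖ : ℂ) * Complex.exp (levelArg k z * Complex.I) = z := by
  have : ((levelArg k z : ℝ) : ℂ) * Complex.I =
      Complex.arg z * Complex.I -
        (⌊(Complex.arg z - 2 * Real.pi * k) / (2 * Real.pi)⌋ : ℤ) * (2 * Real.pi * Complex.I) := by
    unfold levelArg; push_cast; ring
  rw [this, Complex.exp_sub, Complex.exp_int_mul_two_pi_mul_I, div_one,
    Complex.norm_mul_exp_arg_mul_I]

lemma levelPow_eq (β : ℝ) (k : ℤ) (z : ℂ) :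
    levelPow β k z = ((‖z‖ ^ β : ℝ) : ℂ) * Complex.exp ((β * levelArg k z : ℝ) * Complex.I) := by
  rw [levelPow, mul_comm Complex.I]; push_cast; rfl

lemma norm_sub_le_rpow_mul_norm_levelPow_sub {α : ℝ} (hα0 : 0 < α) (hα1 : α < 1) (k : ℤ) {N : ℝ}
    {z w : ℂ} (hz : 0 < ‖z‖) (hw : 0 < ‖w‖) (hzN : ‖z‖ ≤ N) (hwN : ‖w‖ ≤ N) :
    ‖z - w‖ ≤ (1 / α + Real.pi / (α * (1 - α))) * N ^ (1 - α) *
      ‖levelPow α k z - levelPow α k w‖ := by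
  wlog hwz : ‖w‖ ≤ ‖z‖ generalizing z w
  · rw [norm_sub_rev, norm_sub_rev (levelPow α k z)]
    exact this hw hz hwN hzN (le_of_not_ge hwz)
  rw [levelPow_eq, levelPow_eq]
  conv_lhs => rw [← norm_mul_exp_levelArg_mul_I k z, ← norm_mul_exp_levelArg_mul_I k w]
  exact norm_polar_sub_le_rpow_mul_norm_polar_rpow_sub hα0 hα1 hw hwz hzN
    (abs_levelArg_sub_levelArg_le k z w)

lemma exists_pos_le_rpow_mul_norm_levelPow_sub {α : ℝ} (hα0 : 0 < α) (hα1 : α < 1)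
    (z₀ : ℂ) {w₁ w₂ : ℂ} (hindep : LinearIndependent ℝ ![w₁, w₂]) :
    ∃ c > 0, ∀ (k : ℤ) (N : ℝ) (n m : ℂ), n ∈ gridSet z₀ w₁ w₂ → m ∈ gridSet z₀ w₁ w₂ →
      n ≠ m → 0 < ‖n‖ → ‖n‖ ≤ N → 0 < ‖m‖ → ‖m‖ ≤ N →
        c ≤ N ^ (1 - α) * ‖levelPow α k n - levelPow α k m‖ := by
  obtain ⟨δ, hδ, hsep⟩ := exists_pos_le_norm_of_mem_latSet hindep
  set C := 1 / α + Real.pi / (α * (1 - α))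
  have hC : 0 < C := add_pos (by positivity)
    (div_pos Real.pi_pos (mul_pos hα0 (sub_pos.2 hα1)))
  refine ⟨δ / C, div_pos hδ hC, fun k N n m hn hm hnm hn0 hnN hm0 hmN => ?_⟩
  rw [div_le_iff₀' hC, ← mul_assoc]
  exact (hsep _ (sub_mem_latSet hn hm) (sub_ne_zero.2 hnm)).trans
    (norm_sub_le_rpow_mul_norm_levelPow_sub hα0 hα1 k hn0 hm0 hnN hmN)

lemma Rlvl_eq_zero_of_forall {α : ℝ} {z₀ w₁ w₂ : ℂ} {φ ψ : ℕ → ℝ} {N : ℕ} (N' N'' : ℕ)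
    {f : ℂ → ℂ} (h : ∀ (k : ℤ) (n m : ℂ), n ∈ gridSet z₀ w₁ w₂ → m ∈ gridSet z₀ w₁ w₂ →
      n ≠ m → 0 < ‖n‖ → ‖n‖ ≤ N → 0 < ‖m‖ → ‖m‖ ≤ N →
        f ((φ N : ℂ) * (levelPow α k n - levelPow α k m)) = 0) :
    Rlvl α z₀ w₁ w₂ φ ψ N N' N'' f = 0 := by
  refine mul_eq_zero_of_right _ (Finset.sum_eq_zero fun k _ => ?_)
  exact (tsum_congr fun ⟨_, hn, hm, hnm, hn0, hnN, hm0, hmN⟩ =>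
    h k _ _ hn hm hnm hn0 hnN hm0 hmN).trans tsum_zero

theorem stmt_7_general (α : ℝ) (hα : 0 < α ∧ α < 1) (z₀ w₁ w₂ : ℂ)
    (hindep : LinearIndependent ℝ ![w₁, w₂])
    (φ ψ : ℕ → ℝ) (hφpos : ∀ N, 0 < φ N)
    (hlam : Tendsto (fun N : ℕ => φ N / (N : ℝ) ^ (1 - α)) atTop atTop) :
    ∀ A : ℝ, 1 < A → ∃ N₀ : ℕ, ∀ f : ℂ → ℂ,
      ContDiff ℝ 1 f → HasCompactSupport f → tsupport f ⊆ Metric.ball 0 A →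
      ∀ N : ℕ, N₀ ≤ N → ∀ N' N'' : ℕ,
        Rlvl α z₀ w₁ w₂ φ ψ N N' N'' f = 0 := by
  intro A hA
  obtain ⟨c, hc, hsep⟩ := exists_pos_le_rpow_mul_norm_levelPow_sub hα.1 hα.2 z₀ hindep
  obtain ⟨N₀, hN₀⟩ := (hlam.eventually_ge_atTop (A / c)).exists_forall_of_atTop
  refine ⟨N₀, fun f _ _ hsupp N hN N' N'' => Rlvl_eq_zero_of_forall N' N''
    fun k n m hn hm hnm hn0 hnN hm0 hmN => image_eq_zero_of_notMem_tsupport fun hmem => ?_⟩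
  set E := ‖levelPow α k n - levelPow α k m‖
  have hNα : 0 < (N : ℝ) ^ (1 - α) := Real.rpow_pos_of_pos (hn0.trans_le hnN) _
  have hφN : A / c * (N : ℝ) ^ (1 - α) ≤ φ N := (le_div_iff₀ hNα).1 (hN₀ N hN)
  have hA_le : A ≤ ‖(φ N : ℂ) * (levelPow α k n - levelPow α k m)‖ :=
    calc A = A / c * c := (div_mul_cancel₀ A hc.ne').symm
      _ ≤ A / c * ((N : ℝ) ^ (1 - α) * E) := mul_le_mul_of_nonneg_left
        (hsep k N n m hn hm hnm hn0 hnN hm0 hmN) (div_nonneg (by linarith) hc.le)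
      _ ≤ φ N * E := by rw [← mul_assoc]; gcongr
      _ = ‖(φ N : ℂ) * (levelPow α k n - levelPow α k m)‖ := by
        rw [norm_mul, Complex.norm_real, Real.norm_of_nonneg (hφpos N).le]
  exact (mem_ball_zero_iff.1 (hsupp hmem)).not_ge hA_le

/-- In the regime `φ(N)/N^{1−α} → +∞`, the level separated empirical pair correlation
measures eventually vanish on every fixed test function, with a threshold `N₀` depending
only on `α`, `Λ`, `φ` and `A`. -/
theorem stmt_7 (α : ℝ) (hα : 0 < α ∧ α < 1) (z₀ w₁ w₂ : ℂ)
    (hindep : LinearIndependent ℝ ![w₁, w₂])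
    (φ ψ : ℕ → ℝ) (hφpos : ∀ N, 0 < φ N)
    (hlam : Tendsto (fun N : ℕ => φ N / (N : ℝ) ^ (1 - α)) atTop atTop)
    (hψ : ∀ N : ℕ, 1 ≤ N → ψ N = ((N : ℝ) ^ (2 - α) / φ N) ^ 2) :
    ∀ A : ℝ, 1 < A → ∃ N₀ : ℕ, ∀ f : ℂ → ℂ,
      ContDiff ℝ 1 f → HasCompactSupport f → tsupport f ⊆ Metric.ball 0 A →
      ∀ N : ℕ, N₀ ≤ N → ∀ N' N'' : ℕ,
        Rlvl α z₀ w₁ w₂ φ ψ N N' N'' f = 0 :=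
  stmt_7_general α hα z₀ w₁ w₂ hindep φ ψ hφpos hlam
end
end

section
/- Let Λ be a ℤ-grid in ℂ with underlying ℤ-lattice Λ⃗, let g : [0,∞) → [0,∞) be a nonnegative piecewise continuous function, and set L_g = {x + iy : x ≥ 0, y ∈ ℝ, |y| ≤ g(x)}. Then for every N ∈ ℕ, Card( Λ ∩ D(0,N) ∩ L_g ) ≤ 4 Σ_{x=1}^{N} (1 + diam(Λ⃗)) (max_{[x−1,x]} g + diam(Λ⃗)) / covol(Λ⃗). -/
open Filter Topology MeasureTheory

noncomputable section

/-- The closed fundamental parallelogram spanned by `v₁, v₂` (based at `0`). -/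
def para (v₁ v₂ : ℂ) : Set ℂ :=
  {z : ℂ | ∃ s t : ℝ, s ∈ Set.Icc (0 : ℝ) 1 ∧ t ∈ Set.Icc (0 : ℝ) 1 ∧ z = s • v₁ + t • v₂}

/-- The minimal diameter over all closed fundamental parallelograms of the lattice
generated by `w₁, w₂`. -/
def fundDiam (w₁ w₂ : ℂ) : ℝ :=
  sInf {d : ℝ | ∃ v₁ v₂ : ℂ, latSet v₁ v₂ = latSet w₁ w₂ ∧ d = Metric.diam (para v₁ v₂)}

/-- `g` is piecewise continuous: on every compact interval it is bounded and continuous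
outside a finite set of points. -/
def PiecewiseCont (g : ℝ → ℝ) : Prop :=
  ∀ a b : ℝ, BddAbove (g '' Set.Icc a b) ∧
    ∃ s : Finset ℝ, ∀ x ∈ Set.Icc a b, x ∉ s → ContinuousAt g x

/-!
Fix a basis `v₁, v₂` of the lattice and let `d` be the diameter of its closed parallelogram `P`.
The half-open translates `z + P` by the grid points are pairwise disjoint and each has area
`covol`. A point of the grid in `L_g ∩ D(0, N)` with real part in `[x - 1, x]` has its translate
inside the rectangle `[x - 1 - d, x + d] × [-(M + d), M + d]`, where `M = max_{[x-1,x]} g`, of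
area `2 (1 + 2d) (M + d) ≤ 4 (1 + d) (M + d)`. Comparing areas gives the bound for this `d`; it
is continuous in `d`, so it persists at the infimum `diam(Λ⃗)` over all bases.
-/

open scoped Pointwise ComplexConjugate

theorem Set.finite_and_ncard_le_of_forall_finset_card_le {α : Type*} {s : Set α} {K : ℝ}
    (h : ∀ F : Finset α, ↑F ⊆ s → (F.card : ℝ) ≤ K) : s.Finite ∧ (s.ncard : ℝ) ≤ K := by
  have hfin : s.Finite := by
    by_contra hinf
    obtain ⟨F, hF, hcard⟩ := Set.Infinite.exists_subset_card_eq hinf (⌊K⌋₊ + 1)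
    have := h F hF
    rw [hcard, Nat.cast_add_one] at this
    linarith [Nat.lt_floor_add_one K]
  refine ⟨hfin, ?_⟩
  rw [Set.ncard_eq_toFinset_card s hfin]
  exact h _ (by simp)

namespace ComplexLattice

def cross (u v : ℂ) : ℝ := (conj u * v).im

lemma cross_eq (u v : ℂ) : cross u v = u.re * v.im - u.im * v.re := by
  simp only [cross, Complex.mul_im, Complex.conj_re, Complex.conj_im]
  ring

lemma covol_eq_abs_cross (u v : ℂ) : covol u v = |cross u v| := rfl

lemma exists_int_cross_eq_of_latSet_subset {v₁ v₂ w₁ w₂ : ℂ}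
    (h : latSet w₁ w₂ ⊆ latSet v₁ v₂) : ∃ D : ℤ, cross w₁ w₂ = D * cross v₁ v₂ := by
  obtain ⟨a, b, hw₁⟩ := h (show w₁ ∈ latSet w₁ w₂ from ⟨1, 0, by simp⟩)
  obtain ⟨c, d, hw₂⟩ := h (show w₂ ∈ latSet w₁ w₂ from ⟨0, 1, by simp⟩)
  refine ⟨a * d - b * c, ?_⟩
  simp only [cross_eq, hw₁, hw₂, Complex.add_re, Complex.add_im, Complex.mul_re, Complex.mul_im,
    Complex.intCast_re, Complex.intCast_im]
  push_cast
  ring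

/-- Two bases of the same lattice differ by a matrix in `GL₂(ℤ)`, whose determinant is `±1`. -/
lemma covol_eq_of_latSet_eq {v₁ v₂ w₁ w₂ : ℂ} (h : latSet v₁ v₂ = latSet w₁ w₂) :
    covol v₁ v₂ = covol w₁ w₂ := by
  obtain ⟨D, hD⟩ := exists_int_cross_eq_of_latSet_subset h.ge
  obtain ⟨D', hD'⟩ := exists_int_cross_eq_of_latSet_subset h.le
  rw [covol_eq_abs_cross, covol_eq_abs_cross, hD]
  rcases eq_or_ne (cross v₁ v₂) 0 with h0 | h0
  · simp [h0]
  · have hunit : D * D' = 1 := by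
      have : ((D * D' : ℤ) : ℝ) * cross v₁ v₂ = 1 * cross v₁ v₂ := by
        push_cast
        linear_combination -D' * hD - hD'
      exact_mod_cast mul_right_cancel₀ h0 this
    rcases Int.eq_one_or_neg_one_of_mul_eq_one hunit with rfl | rfl <;> simp

def spanMap (v₁ v₂ : ℂ) : ℂ →ₗ[ℝ] ℂ :=
  Complex.reLm.smulRight v₁ + Complex.imLm.smulRight v₂

@[simp]
lemma spanMap_apply (v₁ v₂ z : ℂ) : spanMap v₁ v₂ z = z.re • v₁ + z.im • v₂ := rfl

lemma det_spanMap (v₁ v₂ : ℂ) : LinearMap.det (spanMap v₁ v₂) = cross v₁ v₂ := by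
  rw [← LinearMap.det_toMatrix Complex.basisOneI, Matrix.det_fin_two, cross_eq]
  simp [LinearMap.toMatrix_apply, Complex.coe_basisOneI]
  ring

lemma bijective_spanMap_iff {v₁ v₂ : ℂ} :
    Function.Bijective (spanMap v₁ v₂) ↔ cross v₁ v₂ ≠ 0 := by
  rw [← Module.End.isUnit_iff, LinearMap.isUnit_iff_isUnit_det, det_spanMap, isUnit_iff_ne_zero]

lemma cross_ne_zero_of_linearIndependent {w₁ w₂ : ℂ} (h : LinearIndependent ℝ ![w₁, w₂]) :
    cross w₁ w₂ ≠ 0 := by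
  have hinj : Function.Injective (spanMap w₁ w₂) := by
    rw [← LinearMap.ker_eq_bot, LinearMap.ker_eq_bot']
    intro z hz
    obtain ⟨hre, him⟩ := LinearIndependent.pair_iff.1 h z.re z.im hz
    exact Complex.ext hre him
  exact bijective_spanMap_iff.1 ⟨hinj, LinearMap.injective_iff_surjective.1 hinj⟩

lemma volume_reProdIm {s t : Set ℝ} (hs : MeasurableSet s) (ht : MeasurableSet t) :
    volume (s ×ℂ t) = volume s * volume t := by
  change volume (Complex.measurableEquivRealProd ⁻¹' (s ×ˢ t)) = _
  rw [Complex.volume_preserving_equiv_real_prod.measure_preimage (hs.prod ht).nullMeasurableSet,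
    Measure.volume_eq_prod, Measure.prod_prod]

def unitSquare : Set ℂ := Set.Ico 0 1 ×ℂ Set.Ico 0 1

lemma measurableSet_unitSquare : MeasurableSet unitSquare :=
  (Complex.measurable_re measurableSet_Ico).inter (Complex.measurable_im measurableSet_Ico)

lemma volume_image_unitSquare (v₁ v₂ : ℂ) :
    volume (spanMap v₁ v₂ '' unitSquare) = ENNReal.ofReal (covol v₁ v₂) := by
  rw [Measure.addHaar_image_linearMap, det_spanMap, unitSquare,
    volume_reProdIm measurableSet_Ico measurableSet_Ico]
  simp [covol_eq_abs_cross]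

lemma image_unitSquare_subset_para (v₁ v₂ : ℂ) : spanMap v₁ v₂ '' unitSquare ⊆ para v₁ v₂ := by
  rintro _ ⟨z, ⟨hre, him⟩, rfl⟩
  exact ⟨z.re, z.im, Set.Ico_subset_Icc_self hre, Set.Ico_subset_Icc_self him, rfl⟩

lemma mem_gridSet_iff {z₀ v₁ v₂ z : ℂ} :
    z ∈ gridSet z₀ v₁ v₂ ↔ ∃ a b : ℤ, z = z₀ + spanMap v₁ v₂ (a + b * Complex.I) := by
  simp [gridSet, latSet, Complex.real_smul]

lemma eq_of_intCast_add_eq_intCast_add {m n : ℤ} {x y : ℝ} (hx : x ∈ Set.Ico 0 1)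
    (hy : y ∈ Set.Ico 0 1) (h : m + x = n + y) : m = n := by
  simpa [Int.floor_intCast_add, Int.floor_eq_zero_iff.2 hx, Int.floor_eq_zero_iff.2 hy] using
    congrArg Int.floor h

lemma pairwiseDisjoint_vadd_image_unitSquare {v₁ v₂ : ℂ} (h : cross v₁ v₂ ≠ 0) (z₀ : ℂ) :
    (gridSet z₀ v₁ v₂).PairwiseDisjoint (· +ᵥ spanMap v₁ v₂ '' unitSquare) := by
  intro z hz z' hz' hne
  obtain ⟨a, b, rfl⟩ := mem_gridSet_iff.1 hz
  obtain ⟨a', b', rfl⟩ := mem_gridSet_iff.1 hz'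
  refine Set.disjoint_left.2 ?_
  rintro _ ⟨_, ⟨s, ⟨hs₁, hs₂⟩, rfl⟩, rfl⟩ ⟨_, ⟨s', ⟨hs₁', hs₂'⟩, rfl⟩, heq⟩
  have hcoord : (a' + b' * Complex.I + s' : ℂ) = a + b * Complex.I + s := by
    apply (bijective_spanMap_iff.2 h).1
    simp only [vadd_eq_add, map_add] at heq ⊢
    linear_combination heq
  have hre := congrArg Complex.re hcoord
  have him := congrArg Complex.im hcoord
  simp only [Complex.add_re, Complex.add_im, Complex.mul_re, Complex.mul_im, Complex.intCast_re,
    Complex.intCast_im, Complex.I_re, Complex.I_im, mul_zero, mul_one, sub_zero, add_zero,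
    zero_add] at hre him
  obtain rfl := eq_of_intCast_add_eq_intCast_add hs₁ hs₁' hre.symm
  obtain rfl := eq_of_intCast_add_eq_intCast_add hs₂ hs₂' him.symm
  exact hne rfl

theorem card_mul_covol_le_volume {z₀ v₁ v₂ : ℂ} (h : cross v₁ v₂ ≠ 0) {F : Finset ℂ}
    (hF : ↑F ⊆ gridSet z₀ v₁ v₂) {U : Set ℂ} (hU : ∀ z ∈ F, z +ᵥ para v₁ v₂ ⊆ U) :
    F.card * ENNReal.ofReal (covol v₁ v₂) ≤ volume U := by
  set P := spanMap v₁ v₂ '' unitSquare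
  have hP : MeasurableSet P := measurableSet_unitSquare.image_of_continuousOn_injOn
    (spanMap v₁ v₂).continuous_of_finiteDimensional.continuousOn
    (bijective_spanMap_iff.2 h).1.injOn
  calc F.card * ENNReal.ofReal (covol v₁ v₂) = ∑ z ∈ F, volume (z +ᵥ P) := by
        simp only [P, measure_vadd, volume_image_unitSquare, Finset.sum_const, nsmul_eq_mul]
    _ = volume (⋃ z ∈ F, z +ᵥ P) :=
        (measure_biUnion_finset ((pairwiseDisjoint_vadd_image_unitSquare h z₀).subset hF)
          fun z _ => hP.const_vadd z).symm
    _ ≤ volume U := measure_mono <| Set.iUnion₂_subset fun z hz =>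
        (Set.vadd_set_mono (image_unitSquare_subset_para v₁ v₂)).trans (hU z hz)

lemma isBounded_para (v₁ v₂ : ℂ) : Bornology.IsBounded (para v₁ v₂) := by
  have hK : IsCompact
      ((fun st : ℝ × ℝ => st.1 • v₁ + st.2 • v₂) '' Set.Icc 0 1 ×ˢ Set.Icc 0 1) :=
    (isCompact_Icc.prod isCompact_Icc).image (by fun_prop)
  refine hK.isBounded.subset ?_
  rintro _ ⟨s, t, hs, ht, rfl⟩
  exact ⟨(s, t), ⟨hs, ht⟩, rfl⟩

lemma norm_le_diam_para {v₁ v₂ p : ℂ} (hp : p ∈ para v₁ v₂) : ‖p‖ ≤ Metric.diam (para v₁ v₂) := by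
  simpa using Metric.dist_le_diam_of_mem (isBounded_para v₁ v₂) hp
    (show (0 : ℂ) ∈ para v₁ v₂ from ⟨0, 0, by simp⟩)

lemma add_mem_reProdIm_Icc {z p : ℂ} {a b M d : ℝ} (hre : z.re ∈ Set.Icc a b) (him : |z.im| ≤ M)
    (hp : ‖p‖ ≤ d) : z + p ∈ Set.Icc (a - d) (b + d) ×ℂ Set.Icc (-(M + d)) (M + d) := by
  have hpre := abs_le.1 ((Complex.abs_re_le_norm p).trans hp)
  have hpim := abs_le.1 ((Complex.abs_im_le_norm p).trans hp)
  have hzim := abs_le.1 him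
  refine ⟨⟨?_, ?_⟩, ⟨?_, ?_⟩⟩ <;> simp only [Complex.add_re, Complex.add_im] <;>
    linarith [hre.1, hre.2]

lemma exists_strip_of_mem_tube {g : ℝ → ℝ} (hg : ∀ a b : ℝ, BddAbove (g '' Set.Icc a b)) {N : ℕ}
    {z : ℂ} (hz : z ∈ Metric.ball 0 (N : ℝ) ∩ {z : ℂ | 0 ≤ z.re ∧ |z.im| ≤ g z.re}) :
    ∃ x ∈ Finset.Icc 1 N, z.re ∈ Set.Icc ((x : ℝ) - 1) x ∧
      |z.im| ≤ sSup (g '' Set.Icc ((x : ℝ) - 1) x) := by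
  obtain ⟨hball, hre, him⟩ := hz
  have hlt : z.re < N := (Complex.re_le_norm z).trans_lt (mem_ball_zero_iff.1 hball)
  have hstrip : z.re ∈ Set.Icc ((⌊z.re⌋₊ + 1 : ℕ) - 1 : ℝ) (⌊z.re⌋₊ + 1 : ℕ) := by
    push_cast
    exact ⟨by linarith [Nat.floor_le hre], (Nat.lt_floor_add_one z.re).le⟩
  refine ⟨⌊z.re⌋₊ + 1, ?_, hstrip, him.trans (le_csSup (hg _ _) ⟨z.re, hstrip, rfl⟩)⟩
  simpa [Nat.floor_lt hre] using hlt

theorem card_mul_covol_le_diam_para {z₀ v₁ v₂ : ℂ} (h : cross v₁ v₂ ≠ 0) {g : ℝ → ℝ}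
    (hg0 : ∀ x : ℝ, 0 ≤ x → 0 ≤ g x) (hg : ∀ a b : ℝ, BddAbove (g '' Set.Icc a b)) {N : ℕ}
    {F : Finset ℂ} (hF : ↑F ⊆ gridSet z₀ v₁ v₂ ∩ Metric.ball 0 (N : ℝ) ∩
      {z : ℂ | 0 ≤ z.re ∧ |z.im| ≤ g z.re}) :
    F.card * covol v₁ v₂ ≤ 4 * ∑ x ∈ Finset.Icc 1 N,
      (1 + Metric.diam (para v₁ v₂)) * (sSup (g '' Set.Icc ((x : ℝ) - 1) x) +
        Metric.diam (para v₁ v₂)) := by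
  set d := Metric.diam (para v₁ v₂)
  set M : ℕ → ℝ := fun x => sSup (g '' Set.Icc ((x : ℝ) - 1) x)
  have hd : 0 ≤ d := Metric.diam_nonneg
  have hM : ∀ x ∈ Finset.Icc 1 N, 0 ≤ M x := by
    intro x hx
    have hx1 : (1 : ℝ) ≤ x := by exact_mod_cast (Finset.mem_Icc.1 hx).1
    exact (hg0 _ (by linarith)).trans
      (le_csSup (hg _ _) (Set.mem_image_of_mem g ⟨le_rfl, by linarith⟩))
  set R : ℕ → Set ℂ := fun x => Set.Icc ((x : ℝ) - 1 - d) (x + d) ×ℂ Set.Icc (-(M x + d)) (M x + d)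
  have hcover : ∀ z ∈ F, z +ᵥ para v₁ v₂ ⊆ ⋃ x ∈ Finset.Icc 1 N, R x := by
    rintro z hz _ ⟨p, hp, rfl⟩
    obtain ⟨x, hx, hre, him⟩ := exists_strip_of_mem_tube hg ⟨(hF hz).1.2, (hF hz).2⟩
    exact Set.mem_biUnion hx (add_mem_reProdIm_Icc hre him (norm_le_diam_para hp))
  have hR : ∀ x ∈ Finset.Icc 1 N, volume (R x) ≤ ENNReal.ofReal (4 * ((1 + d) * (M x + d))) := by
    intro x hx
    rw [volume_reProdIm measurableSet_Icc measurableSet_Icc, Real.volume_Icc, Real.volume_Icc,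
      ← ENNReal.ofReal_mul (by linarith)]
    exact ENNReal.ofReal_le_ofReal (by nlinarith [hM x hx])
  have hsum : 0 ≤ ∑ x ∈ Finset.Icc 1 N, 4 * ((1 + d) * (M x + d)) :=
    Finset.sum_nonneg fun x hx => by have := hM x hx; positivity
  rw [Finset.mul_sum, ← ENNReal.ofReal_le_ofReal_iff hsum, ENNReal.ofReal_mul (Nat.cast_nonneg _),
    ENNReal.ofReal_natCast, ENNReal.ofReal_sum_of_nonneg fun x hx => by have := hM x hx; positivity]
  calc _ ≤ volume (⋃ x ∈ Finset.Icc 1 N, R x) :=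
        card_mul_covol_le_volume h (fun z hz => (hF hz).1.1) hcover
    _ ≤ ∑ x ∈ Finset.Icc 1 N, volume (R x) := measure_biUnion_finset_le _ _
    _ ≤ _ := Finset.sum_le_sum hR

theorem card_mul_covol_le_fundDiam {z₀ w₁ w₂ : ℂ} (hw : LinearIndependent ℝ ![w₁, w₂])
    {g : ℝ → ℝ} (hg0 : ∀ x : ℝ, 0 ≤ x → 0 ≤ g x) (hg : ∀ a b : ℝ, BddAbove (g '' Set.Icc a b))
    {N : ℕ} {F : Finset ℂ} (hF : ↑F ⊆ gridSet z₀ w₁ w₂ ∩ Metric.ball 0 (N : ℝ) ∩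
      {z : ℂ | 0 ≤ z.re ∧ |z.im| ≤ g z.re}) :
    F.card * covol w₁ w₂ ≤ 4 * ∑ x ∈ Finset.Icc 1 N,
      (1 + fundDiam w₁ w₂) * (sSup (g '' Set.Icc ((x : ℝ) - 1) x) + fundDiam w₁ w₂) := by
  set diams := {d : ℝ | ∃ v₁ v₂ : ℂ, latSet v₁ v₂ = latSet w₁ w₂ ∧ d = Metric.diam (para v₁ v₂)}
  have hbound : diams ⊆ {d | F.card * covol w₁ w₂ ≤
      4 * ∑ x ∈ Finset.Icc 1 N, (1 + d) * (sSup (g '' Set.Icc ((x : ℝ) - 1) x) + d)} := by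
    rintro _ ⟨v₁, v₂, hlat, rfl⟩
    have hcovol := covol_eq_of_latSet_eq hlat
    have hv : cross v₁ v₂ ≠ 0 := by
      rw [← abs_ne_zero, ← covol_eq_abs_cross, hcovol, covol_eq_abs_cross, abs_ne_zero]
      exact cross_ne_zero_of_linearIndependent hw
    have hgrid : gridSet z₀ v₁ v₂ = gridSet z₀ w₁ w₂ := by simp only [gridSet, hlat]
    rw [← hcovol]
    exact card_mul_covol_le_diam_para hv hg0 hg (hgrid ▸ hF)
  have hne : diams.Nonempty := ⟨_, w₁, w₂, rfl, rfl⟩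
  have hbdd : BddBelow diams := ⟨0, by rintro _ ⟨v₁, v₂, -, rfl⟩; exact Metric.diam_nonneg⟩
  exact closure_minimal hbound (isClosed_le continuous_const (by fun_prop))
    (csInf_mem_closure hne hbdd)

end ComplexLattice

open ComplexLattice

/-- Counting grid points near the graph tube `L_g` of a nonnegative piecewise continuous
function `g`. -/
theorem stmt_13 (z₀ w₁ w₂ : ℂ) (hindep : LinearIndependent ℝ ![w₁, w₂])
    (g : ℝ → ℝ) (hg0 : ∀ x : ℝ, 0 ≤ x → 0 ≤ g x) (hgpc : PiecewiseCont g)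
    (N : ℕ) :
    (gridSet z₀ w₁ w₂ ∩ Metric.ball 0 (N : ℝ) ∩
        {z : ℂ | 0 ≤ z.re ∧ |z.im| ≤ g z.re}).Finite ∧
    ((gridSet z₀ w₁ w₂ ∩ Metric.ball 0 (N : ℝ) ∩
        {z : ℂ | 0 ≤ z.re ∧ |z.im| ≤ g z.re}).ncard : ℝ) ≤
      4 * ∑ x ∈ Finset.Icc 1 N,
        (1 + fundDiam w₁ w₂) * (sSup (g '' Set.Icc ((x : ℝ) - 1) (x : ℝ)) + fundDiam w₁ w₂) /
          covol w₁ w₂ := by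
  have hcovol : 0 < covol w₁ w₂ := abs_pos.2 (cross_ne_zero_of_linearIndependent hindep)
  refine Set.finite_and_ncard_le_of_forall_finset_card_le fun F hF => ?_
  rw [← Finset.sum_div, ← mul_div_assoc, le_div_iff₀ hcovol]
  exact card_mul_covol_le_fundDiam hindep hg0 (fun a b => (hgpc a b).1) hF
end
end

section
/- Fix α ∈ (0,1), a ℤ-grid Λ in ℂ with underlying ℤ-lattice Λ⃗, and φ, ψ : ℕ → (0,∞) with φ(N) → ∞ and ψ(N) = (N^{2−α}/φ(N))². Let f : ℂ → ℂ be continuously differentiable with compact support and A > 1 with supp f ⊆ D(0,A). Then, as N → ∞, uniformly in N', N'' ∈ ℕ with N'+N'' ≥ 1, ℛ^{α,Λ,lvl}_{N,N',N''}(f) = ℛ^{α,Λ,+}_{N,N',N''}(f) + ℛ^{α,Λ,−}_{N,N',N''}(f) + O_{α,Λ}( (N ‖f‖_∞ / ψ(N)) · ( (A N^{1−α}/φ(N)) + 1 )² ), with implied constant depending only on α and Λ. -/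
open Filter Topology MeasureTheory

noncomputable section

/-- The index set `I_N^+` (for `pos = true`) resp. `I_N^−` (for `pos = false`): pairs
`(m,p) ∈ Λ × (Λ⃗∖{0})` with `0 < |m|, |m+p| ≤ N` and `θ(m+p) > θ(m)` resp.
`θ(m+p) < θ(m)`. -/
def Ipm (pos : Bool) (z₀ w₁ w₂ : ℂ) (N : ℕ) : Set (ℂ × ℂ) :=
  {q : ℂ × ℂ | q.1 ∈ gridSet z₀ w₁ w₂ ∧ q.2 ∈ latSet w₁ w₂ ∧ q.2 ≠ 0 ∧
    0 < ‖q.1‖ ∧ ‖q.1‖ ≤ (N : ℝ) ∧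
    0 < ‖q.1 + q.2‖ ∧ ‖q.1 + q.2‖ ≤ (N : ℝ) ∧
    (if pos then levelArg 0 q.1 < levelArg 0 (q.1 + q.2)
      else levelArg 0 (q.1 + q.2) < levelArg 0 q.1)}

/-- Evaluation on `f` of the measure `ℛ^{α,Λ,+}_{N,N',N''}` (for `pos = true`) resp.
`ℛ^{α,Λ,−}_{N,N',N''}` (for `pos = false`). -/
def Rpm (pos : Bool) (α : ℝ) (z₀ w₁ w₂ : ℂ) (φ ψ : ℕ → ℝ) (N N' N'' : ℕ) (f : ℂ → ℂ) : ℂ :=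
  (((((N' + N'' : ℕ) : ℝ) * ψ N)⁻¹ : ℝ) : ℂ) *
    ∑ k ∈ Finset.Ico (-(N' : ℤ)) ((N'' : ℕ) : ℤ),
      ∑' q : (Ipm pos z₀ w₁ w₂ N),
        f (((φ N : ℝ) : ℂ) * (levelPow α k (q.1.1 + q.1.2) - levelPow α k q.1.1))

/-- `‖f‖_∞`. -/
def supNorm (f : ℂ → ℂ) : ℝ := ⨆ z : ℂ, ‖f z‖

/-!
Writing a pair of `Rlvl` as `(m + p, m)`, the pairs with `θ(m + p) ≠ θ(m)` are exactly those of
`Rpm true` and `Rpm false`, so the difference is a sum over the aligned pairs, where `m + p` and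
`m` have the same argument. For these, `|(m + p)^{[α,k]} - m^{[α,k]}| = ||m + p|^α - |m|^α|`,
which by the mean value theorem is at least `α N^{α-1} |p|`; so the summand vanishes unless
`|p| ≤ A N^{1-α} / (α φ(N))`. There are `O((A N^{1-α} / φ(N) + 1)²)` lattice vectors `p` that short,
and for each of them the aligned `m` lie on the line `ℝ p` and are `≫ 1` apart, so there are
`O(N)` of them.
-/

section Lattice

variable {w₁ w₂ : ℂ}

lemma im_conj_mul_ne_zero_of_linearIndependent (hindep : LinearIndependent ℝ ![w₁, w₂]) :
    ((starRingEnd ℂ) w₁ * w₂).im ≠ 0 := by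
  intro hD
  rw [LinearIndependent.pair_iff] at hindep
  have hD' : w₁.re * w₂.im - w₁.im * w₂.re = 0 := by
    simpa [Complex.mul_im, sub_eq_add_neg] using hD
  obtain ⟨-, hw₁im⟩ := hindep w₂.im (-w₁.im) <| by
    apply Complex.ext <;> simp
    · linear_combination hD'
    · ring
  obtain ⟨-, hw₁re⟩ := hindep w₂.re (-w₁.re) <| by
    apply Complex.ext <;> simp
    · ring
    · linear_combination -hD'
  refine one_ne_zero (hindep 1 0 ?_).1
  simp [Complex.ext_iff, neg_eq_zero.mp hw₁im, neg_eq_zero.mp hw₁re]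

def latticeConst (w₁ w₂ : ℂ) : ℝ :=
  (‖w₁‖ + ‖w₂‖) / |((starRingEnd ℂ) w₁ * w₂).im|

lemma latticeConst_pos (hindep : LinearIndependent ℝ ![w₁, w₂]) : 0 < latticeConst w₁ w₂ := by
  have hw₁ : w₁ ≠ 0 := fun h =>
    one_ne_zero (LinearIndependent.pair_iff.mp hindep 1 0 (by simp [h])).1
  exact div_pos (add_pos_of_pos_of_nonneg (norm_pos_iff.mpr hw₁) (norm_nonneg _))
    (abs_pos.mpr (im_conj_mul_ne_zero_of_linearIndependent hindep))

-- Cramer's rule: `conj w₁ * z` and `conj w₂ * z` have imaginary parts `b D` and `-a D`.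
lemma abs_add_abs_le_latticeConst_mul_norm (hindep : LinearIndependent ℝ ![w₁, w₂]) (a b : ℝ) :
    |a| + |b| ≤ latticeConst w₁ w₂ * ‖(a : ℂ) * w₁ + (b : ℂ) * w₂‖ := by
  set D := ((starRingEnd ℂ) w₁ * w₂).im
  set z : ℂ := (a : ℂ) * w₁ + (b : ℂ) * w₂
  have hDpos : 0 < |D| := abs_pos.mpr (im_conj_mul_ne_zero_of_linearIndependent hindep)
  have hb : |b| * |D| ≤ ‖w₁‖ * ‖z‖ := by
    calc |b| * |D| = |((starRingEnd ℂ) w₁ * z).im| := by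
          rw [← abs_mul]; congr 1; simp [z, D, Complex.mul_im, Complex.mul_re]; ring
    _ ≤ ‖w₁‖ * ‖z‖ := by
          simpa [norm_mul, Complex.norm_conj] using Complex.abs_im_le_norm ((starRingEnd ℂ) w₁ * z)
  have ha : |a| * |D| ≤ ‖w₂‖ * ‖z‖ := by
    calc |a| * |D| = |((starRingEnd ℂ) w₂ * z).im| := by
          rw [← abs_mul, ← abs_neg]; congr 1; simp [z, D, Complex.mul_im, Complex.mul_re]; ring
    _ ≤ ‖w₂‖ * ‖z‖ := by
          simpa [norm_mul, Complex.norm_conj] using Complex.abs_im_le_norm ((starRingEnd ℂ) w₂ * z)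
  rw [latticeConst, div_mul_eq_mul_div, le_div_iff₀ hDpos]
  nlinarith [norm_nonneg z]

lemma sub_mem_latSet_s14 {p p' : ℂ} (hp : p ∈ latSet w₁ w₂) (hp' : p' ∈ latSet w₁ w₂) :
    p - p' ∈ latSet w₁ w₂ := by
  obtain ⟨a, b, rfl⟩ := hp
  obtain ⟨a', b', rfl⟩ := hp'
  exact ⟨a - a', b - b', by push_cast; ring⟩

lemma one_le_latticeConst_mul_norm (hindep : LinearIndependent ℝ ![w₁, w₂]) {p : ℂ}
    (hp : p ∈ latSet w₁ w₂) (hp0 : p ≠ 0) : 1 ≤ latticeConst w₁ w₂ * ‖p‖ := by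
  obtain ⟨a, b, rfl⟩ := hp
  have hab : (1 : ℤ) ≤ |a| + |b| := by
    rcases (show a ≠ 0 ∨ b ≠ 0 by by_contra! h; simp [h.1, h.2] at hp0) with h | h
    · linarith [Int.one_le_abs h, abs_nonneg b]
    · linarith [Int.one_le_abs h, abs_nonneg a]
  calc (1 : ℝ) ≤ |(a : ℝ)| + |(b : ℝ)| := by exact_mod_cast hab
    _ ≤ _ := abs_add_abs_le_latticeConst_mul_norm hindep a b
    _ = _ := by push_cast; rfl

variable {z₀ : ℂ}

lemma sub_mem_latSet_of_mem_gridSet {m m' : ℂ} (hm : m ∈ gridSet z₀ w₁ w₂)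
    (hm' : m' ∈ gridSet z₀ w₁ w₂) : m - m' ∈ latSet w₁ w₂ := by
  obtain ⟨p, hp, rfl⟩ := hm
  obtain ⟨p', hp', rfl⟩ := hm'
  simpa using sub_mem_latSet_s14 hp hp'

lemma add_mem_gridSet {m p : ℂ} (hm : m ∈ gridSet z₀ w₁ w₂) (hp : p ∈ latSet w₁ w₂) :
    m + p ∈ gridSet z₀ w₁ w₂ := by
  obtain ⟨q, ⟨a, b, rfl⟩, rfl⟩ := hm
  obtain ⟨a', b', rfl⟩ := hp
  exact ⟨_, ⟨a + a', b + b', rfl⟩, by push_cast; ring⟩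

end Lattice

section Counting

lemma floor_mem_Icc_floor_neg {r x : ℝ} (h : |r| ≤ x) : ⌊r⌋ ∈ Finset.Icc ⌊-x⌋ ⌊x⌋ :=
  Finset.mem_Icc.mpr ⟨Int.floor_mono (neg_le_of_abs_le h), Int.floor_mono (le_of_abs_le h)⟩

lemma card_Icc_floor_neg_le {x : ℝ} (hx : 0 ≤ x) :
    ((Finset.Icc ⌊-x⌋ ⌊x⌋).card : ℝ) ≤ 2 * (x + 1) := by
  have hfl : (0 : ℤ) ≤ ⌊x⌋ := Int.floor_nonneg.mpr hx
  have hcl : (0 : ℤ) ≤ ⌈x⌉ := Int.ceil_nonneg hx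
  have hcard : ((⌊x⌋ + 1 - -⌈x⌉).toNat : ℝ) = ((⌊x⌋ + 1 - -⌈x⌉ : ℤ) : ℝ) := by
    exact_mod_cast Int.toNat_of_nonneg (by omega)
  rw [Int.card_Icc, Int.floor_neg, hcard]
  push_cast
  linarith [Int.floor_le x, Int.ceil_lt_add_one x]

variable {w₁ w₂ : ℂ}

lemma latSet_inter_subset (hindep : LinearIndependent ℝ ![w₁, w₂]) (L : ℝ) :
    {p ∈ latSet w₁ w₂ | ‖p‖ ≤ L} ⊆
      ((Finset.Icc ⌊-(latticeConst w₁ w₂ * L)⌋ ⌊latticeConst w₁ w₂ * L⌋ ×ˢ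
        Finset.Icc ⌊-(latticeConst w₁ w₂ * L)⌋ ⌊latticeConst w₁ w₂ * L⌋).image
          fun ab : ℤ × ℤ => (ab.1 : ℂ) * w₁ + (ab.2 : ℂ) * w₂ : Finset ℂ) := by
  rintro _ ⟨⟨a, b, rfl⟩, hL⟩
  have hab : |(a : ℝ)| + |(b : ℝ)| ≤ latticeConst w₁ w₂ * L :=
    (abs_add_abs_le_latticeConst_mul_norm hindep a b).trans <| by
      simpa using mul_le_mul_of_nonneg_left hL (latticeConst_pos hindep).le
  refine Finset.mem_image.mpr ⟨(a, b), Finset.mem_product.mpr ⟨?_, ?_⟩, rfl⟩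
  · simpa using floor_mem_Icc_floor_neg (x := latticeConst w₁ w₂ * L) (r := a)
      (by linarith [abs_nonneg (b : ℝ)])
  · simpa using floor_mem_Icc_floor_neg (x := latticeConst w₁ w₂ * L) (r := b)
      (by linarith [abs_nonneg (a : ℝ)])

lemma finite_latSet_inter (hindep : LinearIndependent ℝ ![w₁, w₂]) (L : ℝ) :
    {p ∈ latSet w₁ w₂ | ‖p‖ ≤ L}.Finite :=
  (Finset.finite_toSet _).subset (latSet_inter_subset hindep L)

lemma ncard_latSet_inter_le (hindep : LinearIndependent ℝ ![w₁, w₂]) {L : ℝ} (hL : 0 ≤ L) :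
    ({p ∈ latSet w₁ w₂ | ‖p‖ ≤ L}.ncard : ℝ) ≤ (2 * (latticeConst w₁ w₂ * L + 1)) ^ 2 := by
  have hKL : 0 ≤ latticeConst w₁ w₂ * L := mul_nonneg (latticeConst_pos hindep).le hL
  calc ({p ∈ latSet w₁ w₂ | ‖p‖ ≤ L}.ncard : ℝ)
      ≤ (Finset.Icc ⌊-(latticeConst w₁ w₂ * L)⌋ ⌊latticeConst w₁ w₂ * L⌋).card ^ 2 := by
        have := Set.ncard_le_ncard (latSet_inter_subset hindep L)
        rw [Set.ncard_coe_finset] at this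
        exact_mod_cast this.trans (Finset.card_image_le.trans (by rw [Finset.card_product, sq]))
    _ ≤ (2 * (latticeConst w₁ w₂ * L + 1)) ^ 2 := by
        gcongr
        exact card_Icc_floor_neg_le hKL

variable {z₀ : ℂ}

lemma finite_gridSet_inter (hindep : LinearIndependent ℝ ![w₁, w₂]) (r : ℝ) :
    {m ∈ gridSet z₀ w₁ w₂ | ‖m‖ ≤ r}.Finite := by
  refine ((finite_latSet_inter hindep (r + ‖z₀‖)).image (z₀ + ·)).subset ?_
  rintro _ ⟨⟨p, hp, rfl⟩, hr⟩
  refine ⟨p, ⟨hp, ?_⟩, rfl⟩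
  calc ‖p‖ = ‖(z₀ + p) - z₀‖ := by rw [add_sub_cancel_left]
    _ ≤ ‖z₀ + p‖ + ‖z₀‖ := norm_sub_le _ _
    _ ≤ r + ‖z₀‖ := by linarith

end Counting

section LevelPow

lemma levelArg_eq_toIcoMod (k : ℤ) (z : ℂ) :
    levelArg k z = toIcoMod Real.two_pi_pos (2 * Real.pi * k) (Complex.arg z) := by
  rw [toIcoMod, toIcoDiv_eq_floor, levelArg, zsmul_eq_mul, mul_comm]

lemma arg_eq_of_levelArg_eq {k : ℤ} {z w : ℂ} (h : levelArg k z = levelArg k w) :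
    Complex.arg z = Complex.arg w := by
  rw [levelArg_eq_toIcoMod, levelArg_eq_toIcoMod, toIcoMod_eq_toIcoMod] at h
  obtain ⟨n, hn⟩ := h
  rw [← Complex.arg_coe_angle_eq_iff, Real.Angle.angle_eq_iff_two_pi_dvd_sub]
  exact ⟨-n, by rw [zsmul_eq_mul] at hn; push_cast; linarith⟩

lemma norm_levelPow_sub_of_arg_eq (β : ℝ) (k : ℤ) {z w : ℂ}
    (h : Complex.arg z = Complex.arg w) :
    ‖levelPow β k z - levelPow β k w‖ = |‖z‖ ^ β - ‖w‖ ^ β| := by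
  have hlevel : levelArg k z = levelArg k w := by rw [levelArg, levelArg, h]
  rw [levelPow, levelPow, hlevel, ← sub_mul, norm_mul, ← Complex.ofReal_sub, Complex.norm_real,
    Real.norm_eq_abs, mul_comm Complex.I, ← Complex.ofReal_mul, Complex.norm_exp_ofReal_mul_I,
    mul_one]

-- Mean value theorem: the derivative `a t ^ (a - 1)` of `t ^ a` decreases to `a R ^ (a - 1)`.
lemma mul_rpow_mul_sub_le_rpow_sub_rpow {a x y R : ℝ} (ha : 0 < a) (ha1 : a ≤ 1) (hx : 0 < x)
    (hxy : x < y) (hyR : y ≤ R) : a * R ^ (a - 1) * (y - x) ≤ y ^ a - x ^ a := by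
  obtain ⟨c, ⟨hxc, hcy⟩, hc⟩ := exists_hasDerivAt_eq_slope (fun t => t ^ a)
    (fun t => a * t ^ (a - 1)) hxy
    (fun t ht => (Real.continuousAt_rpow_const t a
      (Or.inl (hx.trans_le ht.1).ne')).continuousWithinAt)
    (fun t ht => Real.hasDerivAt_rpow_const (Or.inl (hx.trans ht.1).ne'))
  have hRc : R ^ (a - 1) ≤ c ^ (a - 1) :=
    Real.rpow_le_rpow_of_nonpos (hx.trans hxc) (hcy.le.trans hyR) (by linarith)
  rw [eq_div_iff (sub_pos.mpr hxy).ne'] at hc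
  rw [← hc]
  gcongr

lemma mul_rpow_mul_norm_sub_le_norm_levelPow_sub {α R : ℝ} (hα : 0 < α) (hα1 : α ≤ 1)
    (k : ℤ) {z w : ℂ} (h : Complex.arg z = Complex.arg w) (hz : 0 < ‖z‖) (hw : 0 < ‖w‖)
    (hzR : ‖z‖ ≤ R) (hwR : ‖w‖ ≤ R) :
    α * R ^ (α - 1) * ‖z - w‖ ≤ ‖levelPow α k z - levelPow α k w‖ := by
  rw [norm_levelPow_sub_of_arg_eq α k h,
    Complex.norm_sub_eq_iff.mpr (Or.inr (Or.inr h))]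
  rcases lt_trichotomy ‖w‖ ‖z‖ with hlt | heq | hlt
  · rw [abs_of_pos (sub_pos.mpr hlt),
      abs_of_pos (sub_pos.mpr (Real.rpow_lt_rpow hw.le hlt hα))]
    exact mul_rpow_mul_sub_le_rpow_sub_rpow hα hα1 hw hlt hzR
  · simp [heq]
  · rw [abs_sub_comm, abs_of_pos (sub_pos.mpr hlt), abs_sub_comm,
      abs_of_pos (sub_pos.mpr (Real.rpow_lt_rpow hz.le hlt hα))]
    exact mul_rpow_mul_sub_le_rpow_sub_rpow hα hα1 hz hlt hwR

end LevelPow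

section Pairs

variable {z₀ w₁ w₂ : ℂ} {N : ℕ}

def pairSet (z₀ w₁ w₂ : ℂ) (N : ℕ) : Set (ℂ × ℂ) :=
  {q | q.1 ∈ gridSet z₀ w₁ w₂ ∧ q.2 ∈ latSet w₁ w₂ ∧ q.2 ≠ 0 ∧
    0 < ‖q.1‖ ∧ ‖q.1‖ ≤ (N : ℝ) ∧ 0 < ‖q.1 + q.2‖ ∧ ‖q.1 + q.2‖ ≤ (N : ℝ)}

def alignedPairs (z₀ w₁ w₂ : ℂ) (N : ℕ) : Set (ℂ × ℂ) :=
  {q ∈ pairSet z₀ w₁ w₂ N | levelArg 0 (q.1 + q.2) = levelArg 0 q.1}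

lemma Ipm_eq (pos : Bool) :
    Ipm pos z₀ w₁ w₂ N = {q ∈ pairSet z₀ w₁ w₂ N |
      if pos then levelArg 0 q.1 < levelArg 0 (q.1 + q.2)
      else levelArg 0 (q.1 + q.2) < levelArg 0 q.1} := by
  ext q
  simp only [Ipm, pairSet, Set.mem_ofPred_eq, and_assoc]

lemma pairSet_eq_union :
    pairSet z₀ w₁ w₂ N =
      (Ipm true z₀ w₁ w₂ N ∪ Ipm false z₀ w₁ w₂ N) ∪ alignedPairs z₀ w₁ w₂ N := by
  ext q
  simp only [Ipm_eq, alignedPairs, Set.mem_union, Set.mem_sep_iff, if_true, Bool.false_eq_true,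
    if_false]
  constructor
  · intro hq
    rcases lt_trichotomy (levelArg 0 q.1) (levelArg 0 (q.1 + q.2)) with h | h | h
    · exact Or.inl (Or.inl ⟨hq, h⟩)
    · exact Or.inr ⟨hq, h.symm⟩
    · exact Or.inl (Or.inr ⟨hq, h⟩)
  · rintro ((hq | hq) | hq) <;> exact hq.1

lemma disjoint_Ipm_true_Ipm_false : Disjoint (Ipm true z₀ w₁ w₂ N) (Ipm false z₀ w₁ w₂ N) := by
  simp only [Ipm_eq, if_true, Bool.false_eq_true, if_false, Set.disjoint_left,
    Set.mem_sep_iff]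
  exact fun q h h' => lt_asymm h.2 h'.2

lemma disjoint_Ipm_union_alignedPairs :
    Disjoint (Ipm true z₀ w₁ w₂ N ∪ Ipm false z₀ w₁ w₂ N) (alignedPairs z₀ w₁ w₂ N) := by
  simp only [Ipm_eq, alignedPairs, if_true, Bool.false_eq_true, if_false, Set.disjoint_left,
    Set.mem_union, Set.mem_sep_iff]
  rintro q (h | h) h'
  · exact h.2.ne' h'.2
  · exact h.2.ne h'.2

lemma finite_pairSet (hindep : LinearIndependent ℝ ![w₁, w₂]) (N : ℕ) :
    (pairSet z₀ w₁ w₂ N).Finite := by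
  refine ((finite_gridSet_inter hindep (z₀ := z₀) N).prod
    (finite_latSet_inter hindep (2 * N))).subset ?_
  rintro ⟨m, p⟩ ⟨hm, hp, -, -, hmN, -, hmpN⟩
  refine ⟨⟨hm, hmN⟩, hp, ?_⟩
  calc ‖p‖ = ‖(m + p) - m‖ := by rw [add_sub_cancel_left]
    _ ≤ ‖m + p‖ + ‖m‖ := norm_sub_le _ _
    _ ≤ 2 * N := by linarith

lemma image_pairSet :
    (fun q : ℂ × ℂ => (q.1 + q.2, q.1)) '' pairSet z₀ w₁ w₂ N =
      {q | q.1 ∈ gridSet z₀ w₁ w₂ ∧ q.2 ∈ gridSet z₀ w₁ w₂ ∧ q.1 ≠ q.2 ∧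
        0 < ‖q.1‖ ∧ ‖q.1‖ ≤ (N : ℝ) ∧ 0 < ‖q.2‖ ∧ ‖q.2‖ ≤ (N : ℝ)} := by
  ext ⟨n, m⟩
  constructor
  · rintro ⟨⟨m, p⟩, ⟨hm, hp, hp0, hm0, hmN, hmp0, hmpN⟩, he⟩
    simp only [Prod.mk.injEq] at he
    obtain ⟨rfl, rfl⟩ := he
    exact ⟨add_mem_gridSet hm hp, hm, by simpa using hp0, hmp0, hmpN, hm0, hmN⟩
  · rintro ⟨hn, hm, hnm, hn0, hnN, hm0, hmN⟩
    refine ⟨(m, n - m), ⟨hm, sub_mem_latSet_of_mem_gridSet hn hm, sub_ne_zero.mpr hnm, hm0, hmN,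
      by rwa [add_sub_cancel], by rwa [add_sub_cancel]⟩, by simp⟩

-- `(m, p) ↦ (m + p, m)` maps `pairSet` bijectively onto the index set of `Rlvl`.
lemma tsum_levelSeparated_eq (hindep : LinearIndependent ℝ ![w₁, w₂]) (F : ℂ × ℂ → ℂ) :
    ∑' q : {q : ℂ × ℂ // q.1 ∈ gridSet z₀ w₁ w₂ ∧ q.2 ∈ gridSet z₀ w₁ w₂ ∧ q.1 ≠ q.2 ∧
        0 < ‖q.1‖ ∧ ‖q.1‖ ≤ (N : ℝ) ∧ 0 < ‖q.2‖ ∧ ‖q.2‖ ≤ (N : ℝ)}, F q.1 =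
      ∑' q : Ipm true z₀ w₁ w₂ N, F (q.1.1 + q.1.2, q.1.1) +
        ∑' q : Ipm false z₀ w₁ w₂ N, F (q.1.1 + q.1.2, q.1.1) +
        ∑' q : alignedPairs z₀ w₁ w₂ N, F (q.1.1 + q.1.2, q.1.1) := by
  have hfin := finite_pairSet hindep N (z₀ := z₀)
  have hinj : Set.InjOn (fun q : ℂ × ℂ => (q.1 + q.2, q.1)) (pairSet z₀ w₁ w₂ N) := by
    rintro ⟨m, p⟩ - ⟨m', p'⟩ - h
    simp only [Prod.mk.injEq] at h ⊢
    exact ⟨h.2, by linear_combination h.1 - h.2⟩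
  have himage := tsum_image F hinj
  rw [image_pairSet] at himage
  refine himage.trans ?_
  rw [pairSet_eq_union] at hfin ⊢
  rw [Summable.tsum_union_disjoint (f := fun q : ℂ × ℂ => F (q.1 + q.2, q.1))
    disjoint_Ipm_union_alignedPairs
    ((hfin.subset Set.subset_union_left).summable _)
    ((hfin.subset Set.subset_union_right).summable _),
    Summable.tsum_union_disjoint (f := fun q : ℂ × ℂ => F (q.1 + q.2, q.1))
    disjoint_Ipm_true_Ipm_false
    ((hfin.subset (Set.subset_union_left.trans Set.subset_union_left)).summable _)
    ((hfin.subset (Set.subset_union_right.trans Set.subset_union_left)).summable _)]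

end Pairs

lemma norm_tsum_subtype_le_ncard_mul {ι E : Type*} [SeminormedAddCommGroup E] {S T : Set ι}
    (hT : T.Finite) {g : ι → E} (hST : ∀ q ∈ S, g q ≠ 0 → q ∈ T) {b : ℝ}
    (hb : ∀ q, ‖g q‖ ≤ b) : ‖∑' q : S, g q‖ ≤ T.ncard * b := by
  have hsupp : ∀ q ∉ hT.toFinset, S.indicator g q = 0 := fun q hq => by
    by_cases hqS : q ∈ S
    · rw [Set.indicator_of_mem hqS]
      by_contra hgq
      exact hq (hT.mem_toFinset.mpr (hST q hqS hgq))
    · exact Set.indicator_of_notMem hqS g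
  rw [tsum_subtype, tsum_eq_sum hsupp, Set.ncard_eq_toFinset_card T hT, ← nsmul_eq_mul]
  exact (norm_sum_le _ _).trans (Finset.sum_le_card_nsmul _ _ _ fun q _ =>
    (norm_indicator_le_norm_self g q).trans (hb q))

section Aligned

variable {z₀ w₁ w₂ : ℂ} {N : ℕ}

lemma div_im_eq_zero_of_mem_alignedPairs {q : ℂ × ℂ} (hq : q ∈ alignedPairs z₀ w₁ w₂ N) :
    (q.1 / q.2).im = 0 := by
  obtain ⟨⟨-, -, hp0, hm0, -, hmp0, -⟩, harg⟩ := hq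
  obtain ⟨m, p⟩ := q
  dsimp only at *
  have hr := (Complex.arg_eq_arg_iff (norm_pos_iff.mp hmp0) (norm_pos_iff.mp hm0)).mp
    (arg_eq_of_levelArg_eq harg)
  set r : ℝ := ‖m‖ / ‖m + p‖
  have hr' : (r : ℂ) * (m + p) = m := by simpa [r] using hr
  have hr1 : (1 - r : ℂ) ≠ 0 := by
    intro h
    apply hp0
    linear_combination (m + p) * h + hr'
  have hmp : m / p = ((r / (1 - r) : ℝ) : ℂ) := by
    rw [div_eq_iff hp0]
    push_cast
    field_simp
    linear_combination -hr'
  rw [hmp, Complex.ofReal_im]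

/-- The signed coordinate of `z` along the line `ℝ w`, when `z` lies on it. -/
def lineCoord (z w : ℂ) : ℝ := (z / w).re * ‖w‖

lemma norm_sub_eq_abs_lineCoord_sub {z z' w : ℂ} (hw : w ≠ 0) (hz : (z / w).im = 0)
    (hz' : (z' / w).im = 0) : ‖z - z'‖ = |lineCoord z w - lineCoord z' w| := by
  have hsub : z - z' = (z / w - z' / w) * w := by field_simp
  rw [hsub, norm_mul, ← Complex.abs_re_eq_norm.mpr (by simp [hz, hz']), lineCoord, lineCoord,
    ← sub_mul, abs_mul, abs_norm, Complex.sub_re]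

lemma norm_eq_abs_lineCoord {z w : ℂ} (hw : w ≠ 0) (hz : (z / w).im = 0) :
    ‖z‖ = |lineCoord z w| := by
  simpa [lineCoord] using norm_sub_eq_abs_lineCoord_sub (z' := 0) hw hz (by simp)

lemma eq_of_floor_lineCoord_eq (hindep : LinearIndependent ℝ ![w₁, w₂]) {m m' p : ℂ}
    (hm : (m, p) ∈ alignedPairs z₀ w₁ w₂ N) (hm' : (m', p) ∈ alignedPairs z₀ w₁ w₂ N)
    (h : ⌊latticeConst w₁ w₂ * lineCoord m p⌋ = ⌊latticeConst w₁ w₂ * lineCoord m' p⌋) :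
    m = m' := by
  by_contra hne
  have hsep : 1 ≤ latticeConst w₁ w₂ * ‖m - m'‖ := one_le_latticeConst_mul_norm hindep
    (sub_mem_latSet_of_mem_gridSet hm.1.1 hm'.1.1) (sub_ne_zero.mpr hne)
  have hdist : ‖m - m'‖ = |lineCoord m p - lineCoord m' p| :=
    norm_sub_eq_abs_lineCoord_sub hm.1.2.2.1 (div_im_eq_zero_of_mem_alignedPairs hm)
      (div_im_eq_zero_of_mem_alignedPairs hm')
  have hclose := Int.abs_sub_lt_one_of_floor_eq_floor h
  rw [← mul_sub, abs_mul, abs_of_pos (latticeConst_pos hindep), ← hdist] at hclose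
  linarith

-- For fixed `p` the aligned `m` lie on the line `ℝ p` and are `1 / K` apart, so they are
-- told apart by `⌊K · lineCoord m p⌋`.
lemma ncard_alignedPairs_le (hindep : LinearIndependent ℝ ![w₁, w₂]) {L : ℝ} (hL : 0 ≤ L) :
    ({q ∈ alignedPairs z₀ w₁ w₂ N | ‖q.2‖ ≤ L}.ncard : ℝ) ≤
      (2 * (latticeConst w₁ w₂ * L + 1)) ^ 2 * (2 * (latticeConst w₁ w₂ * N + 1)) := by
  set K := latticeConst w₁ w₂
  have hK := latticeConst_pos hindep
  have hcard := Set.ncard_le_ncard_of_injOn (fun q => (q.2, ⌊K * lineCoord q.1 q.2⌋))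
    (s := {q ∈ alignedPairs z₀ w₁ w₂ N | ‖q.2‖ ≤ L})
    (t := {p ∈ latSet w₁ w₂ | ‖p‖ ≤ L} ×ˢ (Finset.Icc ⌊-(K * N)⌋ ⌊K * N⌋ : Set ℤ))
    (fun q ⟨hq, hqL⟩ => ⟨⟨hq.1.2.1, hqL⟩, floor_mem_Icc_floor_neg <| by
      rw [abs_mul, abs_of_pos hK,
        ← norm_eq_abs_lineCoord hq.1.2.2.1 (div_im_eq_zero_of_mem_alignedPairs hq)]
      exact mul_le_mul_of_nonneg_left hq.1.2.2.2.2.1 hK.le⟩)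
    (by
      rintro ⟨m, p⟩ ⟨hq, -⟩ ⟨m', p'⟩ ⟨hq', -⟩ he
      obtain ⟨rfl, hfl⟩ := Prod.mk.inj he
      rw [eq_of_floor_lineCoord_eq hindep hq hq' hfl])
    ((finite_latSet_inter hindep L).prod (Finset.finite_toSet _))
  rw [Set.ncard_prod, Set.ncard_coe_finset] at hcard
  calc ({q ∈ alignedPairs z₀ w₁ w₂ N | ‖q.2‖ ≤ L}.ncard : ℝ)
      ≤ {p ∈ latSet w₁ w₂ | ‖p‖ ≤ L}.ncard * (Finset.Icc ⌊-(K * N)⌋ ⌊K * N⌋).card := by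
        exact_mod_cast hcard
    _ ≤ _ := mul_le_mul (ncard_latSet_inter_le hindep hL)
        (card_Icc_floor_neg_le (by positivity)) (by positivity) (by positivity)

lemma norm_snd_le_of_mem_alignedPairs {α c A : ℝ} (hα : 0 < α) (hα1 : α ≤ 1) (hc : 0 < c)
    {q : ℂ × ℂ} (hq : q ∈ alignedPairs z₀ w₁ w₂ N) (k : ℤ)
    (h : ‖(c : ℂ) * (levelPow α k (q.1 + q.2) - levelPow α k q.1)‖ < A) :
    ‖q.2‖ ≤ A * (N : ℝ) ^ (1 - α) / c / α := by
  obtain ⟨⟨-, -, -, hm0, hmN, hmp0, hmpN⟩, harg⟩ := hq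
  have hN : (0 : ℝ) < N := hm0.trans_le hmN
  have hgap := mul_rpow_mul_norm_sub_le_norm_levelPow_sub hα hα1 k
    (arg_eq_of_levelArg_eq harg) hmp0 hm0 hmpN hmN
  rw [add_sub_cancel_left] at hgap
  rw [norm_mul, Complex.norm_real, Real.norm_of_nonneg hc.le] at h
  have hinv : (N : ℝ) ^ (α - 1) * (N : ℝ) ^ (1 - α) = 1 := by
    rw [← Real.rpow_add hN]; simp
  rw [div_div, le_div_iff₀ (by positivity)]
  calc ‖q.2‖ * (c * α) = c * (α * (N : ℝ) ^ (α - 1) * ‖q.2‖) * (N : ℝ) ^ (1 - α) := by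
        linear_combination (‖q.2‖ * α * c) * hinv.symm
    _ ≤ c * ‖levelPow α k (q.1 + q.2) - levelPow α k q.1‖ * (N : ℝ) ^ (1 - α) := by gcongr
    _ ≤ A * (N : ℝ) ^ (1 - α) := by gcongr

lemma norm_tsum_alignedPairs_le (hindep : LinearIndependent ℝ ![w₁, w₂]) {α c A b : ℝ}
    (hα : 0 < α) (hα1 : α ≤ 1) (hc : 0 < c) (hA : 0 ≤ A) {f : ℂ → ℂ}
    (hfA : ∀ z, f z ≠ 0 → ‖z‖ < A) (hfb : ∀ z, ‖f z‖ ≤ b) (k : ℤ) :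
    ‖∑' q : alignedPairs z₀ w₁ w₂ N,
        f ((c : ℂ) * (levelPow α k (q.1.1 + q.1.2) - levelPow α k q.1.1))‖ ≤
      (2 * (latticeConst w₁ w₂ * (A * (N : ℝ) ^ (1 - α) / c / α) + 1)) ^ 2 *
        (2 * (latticeConst w₁ w₂ * N + 1)) * b := by
  refine (norm_tsum_subtype_le_ncard_mul (S := alignedPairs z₀ w₁ w₂ N)
    (T := {q ∈ alignedPairs z₀ w₁ w₂ N | ‖q.2‖ ≤ A * (N : ℝ) ^ (1 - α) / c / α})
    ((finite_pairSet hindep N).subset fun q hq => hq.1.1)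
    (fun q hq hfq => ⟨hq, norm_snd_le_of_mem_alignedPairs hα hα1 hc hq k (hfA _ hfq)⟩)
    (fun q => hfb _)).trans ?_
  exact mul_le_mul_of_nonneg_right (ncard_alignedPairs_le hindep (by positivity))
    ((norm_nonneg _).trans (hfb 0))

end Aligned

section PairCorrelation

variable {α : ℝ} {z₀ w₁ w₂ : ℂ} {φ ψ : ℕ → ℝ} {N N' N'' : ℕ} {f : ℂ → ℂ}

lemma Rlvl_sub_Rpm_sub_Rpm_eq (hindep : LinearIndependent ℝ ![w₁, w₂]) :
    Rlvl α z₀ w₁ w₂ φ ψ N N' N'' f - Rpm true α z₀ w₁ w₂ φ ψ N N' N'' f -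
        Rpm false α z₀ w₁ w₂ φ ψ N N' N'' f =
      (((((N' + N'' : ℕ) : ℝ) * ψ N)⁻¹ : ℝ) : ℂ) *
        ∑ k ∈ Finset.Ico (-(N' : ℤ)) ((N'' : ℕ) : ℤ), ∑' q : alignedPairs z₀ w₁ w₂ N,
          f (((φ N : ℝ) : ℂ) * (levelPow α k (q.1.1 + q.1.2) - levelPow α k q.1.1)) := by
  rw [Rlvl, Rpm, Rpm, ← mul_sub, ← mul_sub, ← Finset.sum_sub_distrib, ← Finset.sum_sub_distrib]
  congr 1
  refine Finset.sum_congr rfl fun k _ => ?_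
  rw [tsum_levelSeparated_eq hindep
    (fun q => f (((φ N : ℝ) : ℂ) * (levelPow α k q.1 - levelPow α k q.2)))]
  ring

lemma norm_Rlvl_sub_Rpm_sub_Rpm_le (hindep : LinearIndependent ℝ ![w₁, w₂]) {A b : ℝ}
    (hα : 0 < α) (hα1 : α ≤ 1) (hφ : 0 < φ N) (hψ : 0 < ψ N) (hN'N'' : 1 ≤ N' + N'')
    (hA : 0 ≤ A) (hfA : ∀ z, f z ≠ 0 → ‖z‖ < A) (hfb : ∀ z, ‖f z‖ ≤ b) :
    ‖Rlvl α z₀ w₁ w₂ φ ψ N N' N'' f - Rpm true α z₀ w₁ w₂ φ ψ N N' N'' f -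
        Rpm false α z₀ w₁ w₂ φ ψ N N' N'' f‖ ≤
      (2 * (latticeConst w₁ w₂ * (A * (N : ℝ) ^ (1 - α) / φ N / α) + 1)) ^ 2 *
        (2 * (latticeConst w₁ w₂ * N + 1)) * b / ψ N := by
  set X := (2 * (latticeConst w₁ w₂ * (A * (N : ℝ) ^ (1 - α) / φ N / α) + 1)) ^ 2 *
    (2 * (latticeConst w₁ w₂ * N + 1)) * b
  have hlevels : (Finset.Ico (-(N' : ℤ)) ((N'' : ℕ) : ℤ)).card = N' + N'' := by
    rw [Int.card_Ico]; omega
  have hsum : ‖∑ k ∈ Finset.Ico (-(N' : ℤ)) ((N'' : ℕ) : ℤ), ∑' q : alignedPairs z₀ w₁ w₂ N,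
      f (((φ N : ℝ) : ℂ) * (levelPow α k (q.1.1 + q.1.2) - levelPow α k q.1.1))‖ ≤
      ((N' + N'' : ℕ) : ℝ) * X := by
    rw [← hlevels, ← nsmul_eq_mul]
    exact (norm_sum_le _ _).trans (Finset.sum_le_card_nsmul _ _ _ fun k _ =>
      norm_tsum_alignedPairs_le hindep hα hα1 hφ hA hfA hfb k)
  have hlev : (0 : ℝ) < ((N' + N'' : ℕ) : ℝ) := by exact_mod_cast hN'N''
  rw [Rlvl_sub_Rpm_sub_Rpm_eq hindep, norm_mul, Complex.norm_real,
    Real.norm_of_nonneg (by positivity)]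
  calc (((N' + N'' : ℕ) : ℝ) * ψ N)⁻¹ * ‖_‖ ≤ (((N' + N'' : ℕ) : ℝ) * ψ N)⁻¹ *
        (((N' + N'' : ℕ) : ℝ) * X) := by gcongr
    _ = X / ψ N := by field_simp

lemma norm_le_supNorm (hf : Continuous f) (hcs : HasCompactSupport f) (z : ℂ) :
    ‖f z‖ ≤ supNorm f :=
  le_ciSup (hf.norm.bddAbove_range_of_hasCompactSupport hcs.norm) z

end PairCorrelation

theorem stmt_14_general (α : ℝ) (hα : 0 < α ∧ α < 1) (z₀ w₁ w₂ : ℂ)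
    (hindep : LinearIndependent ℝ ![w₁, w₂])
    (φ ψ : ℕ → ℝ) (hφpos : ∀ N, 0 < φ N)
    (hψ : ∀ N : ℕ, 1 ≤ N → ψ N = ((N : ℝ) ^ (2 - α) / φ N) ^ 2) :
    ∃ C : ℝ, 0 < C ∧ ∀ A : ℝ, 1 < A → ∃ N₀ : ℕ, ∀ f : ℂ → ℂ,
      ContDiff ℝ 1 f → HasCompactSupport f → tsupport f ⊆ Metric.ball 0 A →
      ∀ N : ℕ, N₀ ≤ N → ∀ N' N'' : ℕ, 1 ≤ N' + N'' →
        ‖Rlvl α z₀ w₁ w₂ φ ψ N N' N'' f -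
            Rpm true α z₀ w₁ w₂ φ ψ N N' N'' f -
            Rpm false α z₀ w₁ w₂ φ ψ N N' N'' f‖ ≤
          C * ((N : ℝ) * supNorm f / ψ N) *
            (A * (N : ℝ) ^ (1 - α) / φ N + 1) ^ 2 := by
  set K := latticeConst w₁ w₂
  have hK : 0 < K := latticeConst_pos hindep
  set M := max (K / α) 1
  refine ⟨8 * (K + 1) * M ^ 2, by positivity,
    fun A hA => ⟨1, fun f hf hcs hfA N hN N' N'' hN'N'' => ?_⟩⟩
  have hN1 : (1 : ℝ) ≤ N := by exact_mod_cast hN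
  have hφN := hφpos N
  have hψN : 0 < ψ N := by rw [hψ N hN]; positivity
  have hfb := norm_le_supNorm hf.continuous hcs
  have hsup : 0 ≤ supNorm f := (norm_nonneg _).trans (hfb 0)
  set B := A * (N : ℝ) ^ (1 - α) / φ N
  have hB : 0 ≤ B := by positivity
  have hKB : K * (B / α) + 1 ≤ M * (B + 1) := by
    rw [show K * (B / α) = K / α * B by ring]
    nlinarith [mul_le_mul_of_nonneg_right (le_max_left (K / α) 1) hB, le_max_right (K / α) 1]
  calc _ ≤ (2 * (K * (B / α) + 1)) ^ 2 * (2 * (K * N + 1)) * supNorm f / ψ N :=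
        norm_Rlvl_sub_Rpm_sub_Rpm_le hindep hα.1 hα.2.le hφN hψN hN'N'' (by linarith)
          (fun z hz => mem_ball_zero_iff.mp (hfA (subset_tsupport f hz))) hfb
    _ ≤ (2 * (M * (B + 1))) ^ 2 * (2 * ((K + 1) * N)) * supNorm f / ψ N := by
        have := hα.1
        gcongr
        nlinarith
    _ = 8 * (K + 1) * M ^ 2 * ((N : ℝ) * supNorm f / ψ N) * (B + 1) ^ 2 := by ring

/-- The contribution of pairs with aligned arguments is negligible:
`ℛ^{lvl}(f) = ℛ^{+}(f) + ℛ^{−}(f) + O_{α,Λ}((N‖f‖_∞/ψ(N))(AN^{1−α}/φ(N) + 1)²)`. -/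
theorem stmt_14 (α : ℝ) (hα : 0 < α ∧ α < 1) (z₀ w₁ w₂ : ℂ)
    (hindep : LinearIndependent ℝ ![w₁, w₂])
    (φ ψ : ℕ → ℝ) (hφpos : ∀ N, 0 < φ N)
    (hφ : Tendsto φ atTop atTop)
    (hψ : ∀ N : ℕ, 1 ≤ N → ψ N = ((N : ℝ) ^ (2 - α) / φ N) ^ 2) :
    ∃ C : ℝ, 0 < C ∧ ∀ A : ℝ, 1 < A → ∃ N₀ : ℕ, ∀ f : ℂ → ℂ,
      ContDiff ℝ 1 f → HasCompactSupport f → tsupport f ⊆ Metric.ball 0 A →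
      ∀ N : ℕ, N₀ ≤ N → ∀ N' N'' : ℕ, 1 ≤ N' + N'' →
        ‖Rlvl α z₀ w₁ w₂ φ ψ N N' N'' f -
            Rpm true α z₀ w₁ w₂ φ ψ N N' N'' f -
            Rpm false α z₀ w₁ w₂ φ ψ N N' N'' f‖ ≤
          C * ((N : ℝ) * supNorm f / ψ N) *
            (A * (N : ℝ) ^ (1 - α) / φ N + 1) ^ 2 :=
  stmt_14_general α hα z₀ w₁ w₂ hindep φ ψ hφpos hψ
end
end

section
/- Let α = a/b ∈ (0,1) be rational in irreducible form (a, b coprime positive integers, a < b), let p ∈ ℂ*, let R > 0, and let k₀ ∈ ℤ. Let θ(p) ∈ [0,2π) be the representative of arg(p), and for each k ∈ ℤ let C_{p,k} = {z ∈ ℂ* : arg(z) ∈ θ(p) − (1−α)·2π·(k, k+1) + 2πℤ} and C_p = C_{p,0} ∩ {z : |z| ≥ R}. Then there is a finite union of b rays from the origin (a set of Lebesgue measure zero) outside of which the identity Σ_{k=k₀}^{k₀+b−1} 1_{e^{2πikα} C_p}(z) = (b−a) · 1_{{|z| ≥ R}}(z) holds for every z ∈ ℂ; moreover e^{2πikα}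 C_p = C_{p,k} ∩ {z : |z| ≥ R} for every k. -/
open Filter Topology MeasureTheory
open scoped Classical

noncomputable section

/-- The open angular sector
`C_{p,k} = {z ∈ ℂ* : arg(z) ∈ θ(p) − (1−α)·2π·(k,k+1) + 2πℤ}`. -/
def Csector (α : ℝ) (p : ℂ) (k : ℤ) : Set ℂ :=
  {z : ℂ | z ≠ 0 ∧ ∃ t : ℝ, (k : ℝ) < t ∧ t < (k : ℝ) + 1 ∧ ∃ j : ℤ,
    levelArg 0 z = levelArg 0 p - (1 - α) * (2 * Real.pi) * t + 2 * Real.pi * (j : ℝ)}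

/-- A ray from the origin with direction `e^{iω}`. -/
def ray (ω : ℝ) : Set ℂ := {w : ℂ | ∃ t : ℝ, 0 < t ∧ w = (t : ℂ) * Complex.exp (Complex.I * (ω : ℂ))}

/-! Write `θ = levelArg 0` and `σ = (1 - α)⁻¹`. A point `z ≠ 0` lies in `C_{p,k}` iff the
arithmetic progression `u + σℤ`, where `u = (θ p - θ z) / (2π(1 - α))`, meets the unit interval
`(k, k + 1)`. Since `σα = σ - 1`, rotating `z` by `2πkα` translates this progression by `k`,
which gives `e^{2πikα} C_{p,l} = C_{p,l+k}`. For `α = a/b` we have `σ = b/(b - a) ≥ 1`; off the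
`b` rays `arg z ∈ θ p + 2πℤ/b` the progression avoids `ℤ`. As `σ ≥ 1`, `j ↦ ⌊u + σj⌋` is
injective, so the `k ∈ [k₀, k₀ + b)` whose interval meets it correspond to the `b - a` points of
the progression in `(k₀, k₀ + σ(b - a))`. -/

open Complex Real

lemma coe_levelArg (k : ℤ) (z : ℂ) : (levelArg k z : Angle) = arg z := by
  rw [Angle.angle_eq_iff_two_pi_dvd_sub]
  exact ⟨-⌊(arg z - 2 * π * k) / (2 * π)⌋, by rw [levelArg]; push_cast; ring⟩

lemma arg_exp_mul_I_mul_coe_angle (ψ : ℝ) {w : ℂ} (hw : w ≠ 0) :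
    (arg (exp (ψ * I) * w) : Angle) = ψ + arg w := by
  rw [arg_mul_coe_angle (exp_ne_zero _) hw, ← Circle.coe_exp, ← Angle.toCircle_coe,
    Angle.arg_toCircle]

lemma mem_ray_of_coe_arg_eq {z : ℂ} (hz : z ≠ 0) {ω : ℝ} (h : (arg z : Angle) = ω) :
    z ∈ ray ω := by
  refine ⟨‖z‖, norm_pos_iff.2 hz, ?_⟩
  have := congrArg (fun θ : Angle => (θ.toCircle : ℂ)) h
  simp only [Angle.toCircle_coe, Circle.coe_exp] at this
  rw [mul_comm I, ← this, norm_mul_exp_arg_mul_I]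

lemma mem_iUnion_ray_of_coe_arg_eq {b : ℕ} (hb : 0 < b) {z : ℂ} (hz : z ≠ 0) (θ : ℝ) (M : ℤ)
    (h : (arg z : Angle) = (θ + 2 * π * M / b : ℝ)) :
    z ∈ ⋃ i : Fin b, ray (θ + 2 * π * i / b) := by
  have hbZ : (0 : ℤ) < b := by exact_mod_cast hb
  have hr : (((M % b).toNat : ℕ) : ℝ) = (M % b : ℤ) := by
    exact_mod_cast Int.toNat_of_nonneg (Int.emod_nonneg M hbZ.ne')
  have hM : (M : ℝ) = b * (M / b : ℤ) + (M % b : ℤ) := by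
    exact_mod_cast (Int.mul_ediv_add_emod M b).symm
  refine Set.mem_iUnion.2 ⟨⟨(M % b).toNat, by have := Int.emod_lt_of_pos M hbZ; omega⟩,
    mem_ray_of_coe_arg_eq hz ?_⟩
  rw [h, Angle.angle_eq_iff_two_pi_dvd_sub]
  refine ⟨M / b, ?_⟩
  rw [hr, hM]
  field_simp
  ring

def MeetsUnitInterval (u σ : ℝ) (k : ℤ) : Prop :=
  ∃ j : ℤ, u + σ * j ∈ Set.Ioo (k : ℝ) (k + 1)

lemma meetsUnitInterval_add_mul_int_add_int (u σ : ℝ) (m n k : ℤ) :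
    MeetsUnitInterval (u + σ * m + n) σ (k + n) ↔ MeetsUnitInterval u σ k := by
  constructor
  · rintro ⟨j, h1, h2⟩
    exact ⟨j + m, by push_cast at *; constructor <;> linarith⟩
  · rintro ⟨j, h1, h2⟩
    exact ⟨j - m, by push_cast at *; constructor <;> linarith⟩

lemma strictMono_floor_add_mul {σ : ℝ} (hσ : 1 ≤ σ) (u : ℝ) :
    StrictMono (fun j : ℤ => ⌊u + σ * j⌋) := by
  refine strictMono_int_of_lt_succ fun j => ?_
  rw [Int.lt_iff_add_one_le, ← Int.floor_add_one]
  exact Int.floor_mono (by push_cast; linarith)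

open Finset in
lemma card_filter_meetsUnitInterval {u σ : ℝ} (hσ : 1 ≤ σ) (hu : ∀ j k : ℤ, u + σ * j ≠ k)
    {N n : ℕ} (hN : (N : ℝ) = σ * n) (k₀ : ℤ) :
    #{k ∈ Icc k₀ (k₀ + N - 1) | MeetsUnitInterval u σ k} = n := by
  have hσ0 : 0 < σ := by linarith
  set v := ((k₀ : ℝ) - u) / σ
  have hmem : ∀ j k : ℤ, u + σ * j ∈ Set.Ioo (k : ℝ) (k + 1) ↔ ⌊u + σ * j⌋ = k := fun j k => by
    rw [Int.floor_eq_iff, Set.mem_Ioo, (le_iff_eq_or_lt).trans (or_iff_right (hu j k).symm)]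
  have hrange : ∀ j : ℤ, j ∈ Ico ⌈v⌉ (⌈v⌉ + n) ↔ ⌊u + σ * j⌋ ∈ Icc k₀ (k₀ + N - 1) := fun j => by
    rw [mem_Ico, mem_Icc, Int.ceil_le, ← Int.ceil_add_natCast, Int.lt_ceil, Int.le_floor,
      Int.le_sub_one_iff, Int.floor_lt, div_le_iff₀ hσ0,
      show v + n = ((k₀ + N : ℝ) - u) / σ by
        rw [hN, add_sub_right_comm, add_div, mul_div_cancel_left₀ _ hσ0.ne'],
      lt_div_iff₀ hσ0]
    push_cast
    constructor <;> rintro ⟨h1, h2⟩ <;> constructor <;> linarith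
  have himage : {k ∈ Icc k₀ (k₀ + N - 1) | MeetsUnitInterval u σ k} =
      (Ico ⌈v⌉ (⌈v⌉ + n)).image (fun j : ℤ => ⌊u + σ * j⌋) := by
    ext k
    simp only [mem_filter, mem_image, MeetsUnitInterval, hmem, hrange]
    constructor
    · rintro ⟨hk, j, rfl⟩
      exact ⟨j, hk, rfl⟩
    · rintro ⟨j, hj, rfl⟩
      exact ⟨hj, j, rfl⟩
  rw [himage, card_image_of_injective _ (strictMono_floor_add_mul hσ u).injective, Int.card_Ico]
  omega

def sectorPhase (α : ℝ) (p z : ℂ) : ℝ := (levelArg 0 p - levelArg 0 z) / ((1 - α) * (2 * π))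

section Sector

variable {α : ℝ} {p : ℂ}

lemma mem_Csector_iff (hα : α < 1) (k : ℤ) (z : ℂ) :
    z ∈ Csector α p k ↔ z ≠ 0 ∧ MeetsUnitInterval (sectorPhase α p z) (1 - α)⁻¹ k := by
  have key : ∀ (t : ℝ) (j : ℤ), levelArg 0 z = levelArg 0 p - (1 - α) * (2 * π) * t + 2 * π * j ↔
      t = sectorPhase α p z + (1 - α)⁻¹ * j := fun t j => by
    have h1 : 1 - α ≠ 0 := (sub_pos.2 hα).ne'
    constructor
    · intro h
      rw [sectorPhase, h]
      field_simp
      ring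
    · rintro rfl
      rw [sectorPhase]
      field_simp
      ring
  refine and_congr_right fun _ => ⟨?_, ?_⟩
  · rintro ⟨t, h1, h2, j, hj⟩
    exact ⟨j, (key t j).1 hj ▸ ⟨h1, h2⟩⟩
  · rintro ⟨j, h1, h2⟩
    exact ⟨_, h1, h2, j, (key _ j).2 rfl⟩

lemma sectorPhase_exp_mul (hα : α < 1) (k : ℤ) {w : ℂ} (hw : w ≠ 0) : ∃ m : ℤ,
    sectorPhase α p (exp ((2 * π * k * α : ℝ) * I) * w) =
      sectorPhase α p w + (1 - α)⁻¹ * m + k := by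
  have h := arg_exp_mul_I_mul_coe_angle (2 * π * k * α) hw
  rw [← coe_levelArg 0, ← coe_levelArg 0 w, ← Angle.coe_add,
    Angle.angle_eq_iff_two_pi_dvd_sub] at h
  obtain ⟨n, hn⟩ := h
  refine ⟨-(k + n), ?_⟩
  have h1 : 1 - α ≠ 0 := (sub_pos.2 hα).ne'
  rw [sectorPhase, sectorPhase, eq_add_of_sub_eq hn]
  push_cast
  field_simp
  ring

lemma exp_mul_mem_Csector_iff (hα : α < 1) (l k : ℤ) (w : ℂ) :
    exp ((2 * π * k * α : ℝ) * I) * w ∈ Csector α p (l + k) ↔ w ∈ Csector α p l := by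
  rcases eq_or_ne w 0 with rfl | hw
  · simp [Csector]
  obtain ⟨m, hm⟩ := sectorPhase_exp_mul hα k hw
  rw [mem_Csector_iff hα, mem_Csector_iff hα, hm, meetsUnitInterval_add_mul_int_add_int]
  simp [hw, Complex.exp_ne_zero]

lemma image_exp_mul_Csector_inter (hα : α < 1) (R : ℝ) (l k : ℤ) :
    (fun w : ℂ => exp ((2 * π * k * α : ℝ) * I) * w) '' (Csector α p l ∩ {w : ℂ | R ≤ ‖w‖}) =
      Csector α p (l + k) ∩ {w : ℂ | R ≤ ‖w‖} := by
  ext z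
  obtain ⟨w, rfl⟩ : ∃ w, exp ((2 * π * k * α : ℝ) * I) * w = z :=
    ⟨exp (-(2 * π * k * α : ℝ) * I) * z, by rw [← mul_assoc, ← Complex.exp_add]; simp⟩
  rw [(mul_right_injective₀ (Complex.exp_ne_zero _)).mem_set_image]
  simp only [Set.mem_inter_iff, Set.mem_ofPred_eq, norm_mul, norm_exp_ofReal_mul_I, one_mul,
    exp_mul_mem_Csector_iff hα]

end Sector

lemma sectorPhase_add_mul_ne_int {a b : ℕ} (hab : a < b) {p z : ℂ} (hz : z ≠ 0)
    (hzω : z ∉ ⋃ i : Fin b, ray (levelArg 0 p + 2 * π * i / b)) (j k : ℤ) :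
    sectorPhase ((a : ℝ) / b) p z + (1 - (a : ℝ) / b)⁻¹ * j ≠ k := by
  have hab' : (a : ℝ) < b := by exact_mod_cast hab
  have hba : (b : ℝ) - a ≠ 0 := by linarith
  intro h
  refine hzω (mem_iUnion_ray_of_coe_arg_eq ((Nat.zero_le a).trans_lt hab) hz _
    ((j - k) * b + a * k) ?_)
  rw [← coe_levelArg 0]
  congr 1
  rw [sectorPhase] at h
  have : (b : ℝ) ≠ 0 := by linarith [(Nat.cast_nonneg a : (0 : ℝ) ≤ a)]
  field_simp at h
  push_cast
  field_simp
  linear_combination -h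

theorem stmt_18_general (a b : ℕ) (hab : a < b)
    (p : ℂ) (R : ℝ) (hR : 0 < R) (k₀ : ℤ) :
    ∃ ω : Fin b → ℝ,
      (∀ z : ℂ, z ∉ ⋃ i : Fin b, ray (ω i) →
        ∑ k ∈ Finset.Icc k₀ (k₀ + (b : ℤ) - 1),
          (if z ∈ (fun w : ℂ =>
              Complex.exp (((2 * Real.pi * (k : ℝ) * ((a : ℝ) / (b : ℝ)) : ℝ) : ℂ) *
                Complex.I) * w) ''
              (Csector ((a : ℝ) / (b : ℝ)) p 0 ∩ {w : ℂ | R ≤ ‖w‖})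
            then (1 : ℝ) else 0) =
          ((b : ℝ) - (a : ℝ)) * (if R ≤ ‖z‖ then (1 : ℝ) else 0)) ∧
      (∀ k : ℤ, (fun w : ℂ =>
          Complex.exp (((2 * Real.pi * (k : ℝ) * ((a : ℝ) / (b : ℝ)) : ℝ) : ℂ) *
            Complex.I) * w) ''
          (Csector ((a : ℝ) / (b : ℝ)) p 0 ∩ {w : ℂ | R ≤ ‖w‖}) =
        Csector ((a : ℝ) / (b : ℝ)) p k ∩ {w : ℂ | R ≤ ‖w‖}) := by
  have hab' : (a : ℝ) < b := by exact_mod_cast hab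
  have hb : (0 : ℝ) < b := (Nat.cast_nonneg a).trans_lt hab'
  have hα : (a : ℝ) / b < 1 := (div_lt_one hb).2 hab'
  have himg (k : ℤ) := by
    simpa only [zero_add] using image_exp_mul_Csector_inter (p := p) hα R 0 k
  refine ⟨fun i => levelArg 0 p + 2 * π * i / b, fun z hz => ?_, himg⟩
  simp only [himg, Set.mem_inter_iff, Set.mem_ofPred_eq]
  by_cases hzR : R ≤ ‖z‖
  · have hz0 : z ≠ 0 := norm_pos_iff.1 (hR.trans_le hzR)
    have hσ : 1 ≤ (1 - (a : ℝ) / b)⁻¹ :=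
      (one_le_inv₀ (by linarith)).2 (sub_le_self _ (by positivity))
    have hN : (b : ℝ) = (1 - (a : ℝ) / b)⁻¹ * (b - a : ℕ) := by
      have : (b : ℝ) - a ≠ 0 := by linarith
      rw [Nat.cast_sub hab.le]
      field_simp
    simp only [mem_Csector_iff hα, hz0, hzR, ne_eq, not_false_eq_true, true_and, and_true,
      if_true, mul_one]
    rw [Finset.sum_boole,
      card_filter_meetsUnitInterval hσ (sectorPhase_add_mul_ne_int hab hz0 hz) hN,
      Nat.cast_sub hab.le]
  · simp [hzR]

/-- Covering identity in the rational case `α = a/b`: outside of a union of `b` rays from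
the origin, `Σ_{k=k₀}^{k₀+b−1} 1_{e^{2πikα}C_p} = (b−a)·1_{{|z|≥R}}`, and moreover
`e^{2πikα}C_p = C_{p,k} ∩ {|z| ≥ R}` for every `k`. -/
theorem stmt_18 (a b : ℕ) (ha : 0 < a) (hab : a < b) (hcop : Nat.Coprime a b)
    (p : ℂ) (hp : p ≠ 0) (R : ℝ) (hR : 0 < R) (k₀ : ℤ) :
    ∃ ω : Fin b → ℝ,
      (∀ z : ℂ, z ∉ ⋃ i : Fin b, ray (ω i) →
        ∑ k ∈ Finset.Icc k₀ (k₀ + (b : ℤ) - 1),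
          (if z ∈ (fun w : ℂ =>
              Complex.exp (((2 * Real.pi * (k : ℝ) * ((a : ℝ) / (b : ℝ)) : ℝ) : ℂ) *
                Complex.I) * w) ''
              (Csector ((a : ℝ) / (b : ℝ)) p 0 ∩ {w : ℂ | R ≤ ‖w‖})
            then (1 : ℝ) else 0) =
          ((b : ℝ) - (a : ℝ)) * (if R ≤ ‖z‖ then (1 : ℝ) else 0)) ∧
      (∀ k : ℤ, (fun w : ℂ =>
          Complex.exp (((2 * Real.pi * (k : ℝ) * ((a : ℝ) / (b : ℝ)) : ℝ) : ℂ) *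
            Complex.I) * w) ''
          (Csector ((a : ℝ) / (b : ℝ)) p 0 ∩ {w : ℂ | R ≤ ‖w‖}) =
        Csector ((a : ℝ) / (b : ℝ)) p k ∩ {w : ℂ | R ≤ ‖w‖}) :=
  stmt_18_general a b hab p R hR k₀
end
end
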